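/- arXiv:2508.06940 — 6 statements merged into one kernel-verified Lean document; each statement's English description precedes it below -/
import Mathlib

section
/- Let q ∈ [2,∞) be real, ρ ∈ (0,1), and set λ := ln( μ*·(1+ρ·(1/μ*−1))^q + (1−μ*)·(1−ρ)^q ) / ((q−1)·ln(1/μ*)). For a nonnegative function f : Ω → ℝ, equality holds in ‖T_ρ f‖_q ≤ ‖f‖_1^{1−λ} · ‖f‖_q^{λ} if and only if f is constant, or f has exactly one nonzero value, attained at a point x* with μ(x*) = μ*. -/
/-
Both sides are positively homogeneous, so normalise `E f = 1` and let `m = E f ^ q`.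
Bernoulli's inequality gives `m ≥ 1`, with equality only for constants, and `f ≤ 1 / μ*` gives
`m ≤ T ^ (q - 1)` with `T = 1 / μ*`, with equality only for `T` times the indicator of an atom of
minimal mass; in these two cases equality is a direct computation.

For `1 < m < T ^ (q - 1)` write `m = t ^ (q - 1)` with `t = T ^ v`, `0 < v < 1`. A majorant
`(1 - ρ) ^ q + b x + θ x ^ q` of `(ρ x + 1 - ρ) ^ q` on `[0, ∞)`, tangent at `x = t`, gives
`E (T_ρ f) ^ q ≤ κ(t)`, where `κ(s)` is the value of `E (T_ρ g) ^ q` for `g` equal to `s` times the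
indicator of a set of mass `1 / s`. Writing `κ(s) - (1 - ρ) ^ q` as an integral of log-convex
functions of `log s`, Hölder's inequality gives `κ(T ^ v) < κ(T) ^ v`, and `κ(T) ^ v = m ^ λ` by the
choice of `λ`. So equality is impossible there.
-/

open Finset

/-- Expectation of `f` under the probability mass function `μ` on a finite set. -/
noncomputable def expct {Ω : Type*} [Fintype Ω] (μ : Ω → ℝ) (f : Ω → ℝ) : ℝ :=
  ∑ x, μ x * f x

/-- The noise operator `T_ρ f = ρ f + (1-ρ) E[f]`. -/
noncomputable def noiseOp {Ω : Type*} [Fintype Ω] (μ : Ω → ℝ) (ρ : ℝ) (f : Ω → ℝ) : Ω → ℝ :=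
  fun x => ρ * f x + (1 - ρ) * expct μ f

/-- The `q`-norm `(E_{x∼μ} |f(x)|^q)^{1/q}`. -/
noncomputable def qNorm {Ω : Type*} [Fintype Ω] (μ : Ω → ℝ) (q : ℝ) (f : Ω → ℝ) : ℝ :=
  (∑ x, μ x * |f x| ^ q) ^ (1 / q)

open Real Set

lemma rpow_one_sub_mul_rpow_eq {a b v : ℝ} (ha : 0 < a) (hb : 0 ≤ b) :
    a ^ (1 - v) * b ^ v = a * (b / a) ^ v := by
  rw [div_rpow hb ha.le, rpow_sub ha, rpow_one]
  field_simp

lemma add_mul_rpow_le_rpow_mul_rpow {β r T v : ℝ} (hβ : 0 < β) (hr : 0 ≤ r) (hT : 0 ≤ T)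
    (hv0 : 0 ≤ v) (hv1 : v ≤ 1) :
    β + T ^ v * r ≤ (β + r) ^ (1 - v) * (β + T * r) ^ v := by
  have hβr : 0 < β + r := by positivity
  have hconc := (concaveOn_rpow hv0 hv1).2 (mem_Ici.2 zero_le_one) (mem_Ici.2 hT)
    (div_nonneg hβ.le hβr.le) (div_nonneg hr hβr.le) (by field_simp)
  have hmean : β / (β + r) * 1 + r / (β + r) * T = (β + T * r) / (β + r) := by field_simp
  simp only [smul_eq_mul, one_rpow, hmean] at hconc
  rw [rpow_one_sub_mul_rpow_eq hβr (by positivity)]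
  calc β + T ^ v * r = (β + r) * (β / (β + r) * 1 + r / (β + r) * T ^ v) := by field_simp
    _ ≤ _ := mul_le_mul_of_nonneg_left hconc hβr.le

lemma rpow_mul_rpow_add_rpow_mul_rpow_lt {a b c d v : ℝ} (ha : 0 < a) (hb : 0 ≤ b) (hc : 0 < c)
    (hd : 0 ≤ d) (hv0 : 0 < v) (hv1 : v < 1) (hne : b / a ≠ d / c) :
    a ^ (1 - v) * b ^ v + c ^ (1 - v) * d ^ v < (a + c) ^ (1 - v) * (b + d) ^ v := by
  have hac : 0 < a + c := by positivity
  have hconc := (strictConcaveOn_rpow hv0 hv1).2 (mem_Ici.2 (div_nonneg hb ha.le))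
    (mem_Ici.2 (div_nonneg hd hc.le)) hne (div_pos ha hac) (div_pos hc hac) (by field_simp)
  have hmean : a / (a + c) * (b / a) + c / (a + c) * (d / c) = (b + d) / (a + c) := by
    field_simp
  simp only [smul_eq_mul, hmean] at hconc
  rw [rpow_one_sub_mul_rpow_eq ha hb, rpow_one_sub_mul_rpow_eq hc hd,
    rpow_one_sub_mul_rpow_eq hac (add_nonneg hb hd)]
  calc a * (b / a) ^ v + c * (d / c) ^ v
      = (a + c) * (a / (a + c) * (b / a) ^ v + c / (a + c) * (d / c) ^ v) := by field_simp
    _ < _ := mul_lt_mul_of_pos_left hconc hac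

lemma intervalIntegral_rpow_mul_rpow_le {F G : ℝ → ℝ} {a b v : ℝ} (hab : a ≤ b)
    (hF : ContinuousOn F (Icc a b)) (hG : ContinuousOn G (Icc a b))
    (hF0 : ∀ x ∈ Icc a b, 0 ≤ F x) (hG0 : ∀ x ∈ Icc a b, 0 ≤ G x)
    (hA : 0 < ∫ x in a..b, F x) (hB : 0 < ∫ x in a..b, G x) (hv0 : 0 ≤ v) (hv1 : v ≤ 1) :
    ∫ x in a..b, F x ^ (1 - v) * G x ^ v ≤
      (∫ x in a..b, F x) ^ (1 - v) * (∫ x in a..b, G x) ^ v := by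
  set A := ∫ x in a..b, F x
  set B := ∫ x in a..b, G x
  -- Young's inequality for `F / A` and `G / B`, integrated
  have hyoung : ∀ x ∈ Icc a b,
      F x ^ (1 - v) * G x ^ v ≤ A ^ (1 - v) * B ^ v * ((1 - v) / A * F x + v / B * G x) := by
    intro x hx
    have h := geom_mean_le_arith_mean2_weighted (sub_nonneg.2 hv1) hv0
      (div_nonneg (hF0 x hx) hA.le) (div_nonneg (hG0 x hx) hB.le) (by ring)
    rw [div_rpow (hF0 x hx) hA.le, div_rpow (hG0 x hx) hB.le, div_mul_div_comm,
      div_le_iff₀ (by positivity)] at h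
    exact h.trans_eq (by ring)
  have hFi := hF.intervalIntegrable_of_Icc (μ := MeasureTheory.volume) hab
  have hGi := hG.intervalIntegrable_of_Icc (μ := MeasureTheory.volume) hab
  calc ∫ x in a..b, F x ^ (1 - v) * G x ^ v
      ≤ ∫ x in a..b, A ^ (1 - v) * B ^ v * ((1 - v) / A * F x + v / B * G x) :=
        intervalIntegral.integral_mono_on hab
          (((hF.rpow_const fun _ _ => Or.inr (sub_nonneg.2 hv1)).mul
            (hG.rpow_const fun _ _ => Or.inr hv0)).intervalIntegrable_of_Icc hab)
          ((hFi.const_mul _).add (hGi.const_mul _) |>.const_mul _) hyoung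
    _ = A ^ (1 - v) * B ^ v := by
        rw [intervalIntegral.integral_const_mul, intervalIntegral.integral_add
          (hFi.const_mul _) (hGi.const_mul _), intervalIntegral.integral_const_mul,
          intervalIntegral.integral_const_mul]
        field_simp
        ring

lemma integral_add_mul_rpow {β s ρ q : ℝ} (hs : s ≠ 0) (hq : 0 < q) :
    ∫ r in (0 : ℝ)..ρ, (β + s * r) ^ (q - 1) = ((β + s * ρ) ^ q - β ^ q) / (q * s) := by
  rw [intervalIntegral.integral_comp_add_mul (fun x => x ^ (q - 1)) hs,
    integral_rpow (Or.inl (by linarith)), sub_add_cancel, mul_zero, add_zero, smul_eq_mul]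
  field_simp

/-- `kappa ρ q s = E (T_ρ (s • 1_A)) ^ q` for a set `A` of mass `1 / s`. -/
noncomputable def kappa (ρ q s : ℝ) : ℝ :=
  (ρ * s + (1 - ρ)) ^ q / s + (1 - 1 / s) * (1 - ρ) ^ q

lemma kappa_one (ρ q : ℝ) : kappa ρ q 1 = 1 := by
  simp [kappa]

lemma kappa_one_div (ρ q p : ℝ) :
    kappa ρ q (1 / p) = p * (1 + ρ * (1 / p - 1)) ^ q + (1 - p) * (1 - ρ) ^ q := by
  rw [kappa, one_div_one_div, div_div_eq_mul_div, div_one,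
    show ρ * (1 / p) + (1 - ρ) = 1 + ρ * (1 / p - 1) by ring]
  ring

lemma kappa_eq_integral {ρ q s : ℝ} (hs : 0 < s) (hq : 0 < q) :
    kappa ρ q s = (1 - ρ) ^ q + q * ∫ r in (0 : ℝ)..ρ, (1 - ρ + s * r) ^ (q - 1) := by
  rw [integral_add_mul_rpow hs.ne' hq, kappa, show 1 - ρ + s * ρ = ρ * s + (1 - ρ) by ring]
  field_simp
  ring

lemma kappa_pos {ρ q s : ℝ} (hρ0 : 0 ≤ ρ) (hρ1 : ρ < 1) (hs : 1 ≤ s) : 0 < kappa ρ q s := by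
  have hs0 : 0 < s := by linarith
  have : 0 ≤ 1 - 1 / s := sub_nonneg.2 ((div_le_one hs0).2 hs)
  unfold kappa
  have : 0 < ρ * s + (1 - ρ) := by nlinarith
  positivity

/-- The exponent `λ` of the theorem is `noiseExponent ρ q (1 / μ*)`. -/
noncomputable def noiseExponent (ρ q T : ℝ) : ℝ :=
  log (kappa ρ q T) / ((q - 1) * log T)

lemma rpow_noiseExponent {ρ q T : ℝ} (hρ0 : 0 ≤ ρ) (hρ1 : ρ < 1) (hq : 1 < q) (hT : 1 < T) :
    (T ^ (q - 1)) ^ noiseExponent ρ q T = kappa ρ q T := by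
  have hT0 : 0 < T := by linarith
  rw [← rpow_mul hT0.le, rpow_def_of_pos hT0, noiseExponent,
    show log T * ((q - 1) * (log (kappa ρ q T) / ((q - 1) * log T))) = log (kappa ρ q T) by
      field_simp [(log_pos hT).ne', (sub_pos.2 hq).ne'],
    exp_log (kappa_pos hρ0 hρ1 hT.le)]

lemma integral_add_rpow_mul_le {β ρ q T v : ℝ} (hβ : 0 < β) (hρ : 0 ≤ ρ) (hq : 1 ≤ q)
    (hT : 0 ≤ T) (hv0 : 0 ≤ v) (hv1 : v ≤ 1) (hI1 : 0 < ∫ r in (0 : ℝ)..ρ, (β + r) ^ (q - 1))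
    (hIT : 0 < ∫ r in (0 : ℝ)..ρ, (β + T * r) ^ (q - 1)) :
    ∫ r in (0 : ℝ)..ρ, (β + T ^ v * r) ^ (q - 1) ≤
      (∫ r in (0 : ℝ)..ρ, (β + r) ^ (q - 1)) ^ (1 - v) *
        (∫ r in (0 : ℝ)..ρ, (β + T * r) ^ (q - 1)) ^ v := by
  have hcont : ∀ s, Continuous fun r => (β + s * r) ^ (q - 1) := fun s =>
    (continuous_const.add (continuous_const.mul continuous_id)).rpow_const
      fun _ => Or.inr (by linarith)
  have hcont1 : Continuous fun r => (β + r) ^ (q - 1) := by simpa using hcont 1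
  calc ∫ r in (0 : ℝ)..ρ, (β + T ^ v * r) ^ (q - 1)
      ≤ ∫ r in (0 : ℝ)..ρ, ((β + r) ^ (q - 1)) ^ (1 - v) * ((β + T * r) ^ (q - 1)) ^ v := by
        refine intervalIntegral.integral_mono_on hρ ((hcont _).intervalIntegrable _ _)
          (((hcont1.rpow_const fun _ => Or.inr (by linarith)).mul
            ((hcont T).rpow_const fun _ => Or.inr hv0)).intervalIntegrable _ _) fun r hr => ?_
        have hX : 0 ≤ β + r := by linarith [hr.1]
        have hY : 0 ≤ β + T * r := by nlinarith [hr.1]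
        calc (β + T ^ v * r) ^ (q - 1)
            ≤ ((β + r) ^ (1 - v) * (β + T * r) ^ v) ^ (q - 1) :=
              rpow_le_rpow (by nlinarith [hr.1, rpow_nonneg hT v])
                (add_mul_rpow_le_rpow_mul_rpow hβ hr.1 hT hv0 hv1) (by linarith)
          _ = _ := by
              rw [mul_rpow (by positivity) (by positivity), ← rpow_mul hX, ← rpow_mul hX,
                ← rpow_mul hY, ← rpow_mul hY, mul_comm (1 - v), mul_comm v]
    _ ≤ _ := intervalIntegral_rpow_mul_rpow_le hρ hcont1.continuousOn (hcont T).continuousOn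
        (fun r hr => rpow_nonneg (by linarith [hr.1]) _)
        (fun r hr => rpow_nonneg (by nlinarith [hr.1]) _) hI1 hIT hv0 hv1

/-- By `kappa_eq_integral` and `integral_add_rpow_mul_le`, `kappa ρ q (exp s) - (1 - ρ) ^ q` is
log-convex in `s`; adding the constant `(1 - ρ) ^ q` keeps strict log-convexity along the chord
from `s = 0`, by the strict two-term Hölder inequality. -/
lemma kappa_rpow_lt {ρ q T v : ℝ} (hq : 1 < q) (hρ0 : 0 < ρ) (hρ1 : ρ < 1) (hT : 1 < T)
    (hv0 : 0 < v) (hv1 : v < 1) : kappa ρ q (T ^ v) < kappa ρ q T ^ v := by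
  have hq0 : 0 < q := by linarith
  have hT0 : 0 < T := by linarith
  set β := 1 - ρ with hβ
  have hβ0 : 0 < β := by linarith
  set I : ℝ → ℝ := fun s => ∫ r in (0 : ℝ)..ρ, (β + s * r) ^ (q - 1) with hI
  have hκ : ∀ s, 0 < s → kappa ρ q s = β ^ q + q * I s := fun s hs => kappa_eq_integral hs hq0
  have hcont : ∀ s, Continuous fun r => (β + s * r) ^ (q - 1) := fun s =>
    (continuous_const.add (continuous_const.mul continuous_id)).rpow_const
      fun _ => Or.inr (by linarith)
  have hI1T : I 1 < I T :=
    intervalIntegral.integral_lt_integral_of_continuousOn_of_le_of_exists_lt hρ0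
      (hcont 1).continuousOn (hcont T).continuousOn
      (fun r hr => rpow_le_rpow (by nlinarith [hr.1]) (by nlinarith [hr.1]) (by linarith))
      ⟨ρ, right_mem_Icc.2 hρ0.le, rpow_lt_rpow (by positivity) (by nlinarith) (by linarith)⟩
  have hI1 : 0 < I 1 := by
    have h := hκ 1 one_pos
    rw [kappa_one] at h
    have : β ^ q < 1 := rpow_lt_one hβ0.le (by linarith) hq0
    nlinarith
  have hI1eq : I 1 = ∫ r in (0 : ℝ)..ρ, (β + r) ^ (q - 1) := by simp only [hI, one_mul]
  have hholder : I (T ^ v) ≤ I 1 ^ (1 - v) * I T ^ v := by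
    rw [hI1eq]
    exact integral_add_rpow_mul_le hβ0 hρ0.le hq.le hT0.le hv0.le hv1.le (hI1eq ▸ hI1)
      (hI1.trans hI1T)
  have hβq : 0 < β ^ q := rpow_pos_of_pos hβ0 q
  have hqq : q ^ (1 - v) * q ^ v = q := by rw [← rpow_add hq0, sub_add_cancel, rpow_one]
  calc kappa ρ q (T ^ v) = β ^ q + q * I (T ^ v) := hκ _ (rpow_pos_of_pos hT0 v)
    _ ≤ β ^ q + q * (I 1 ^ (1 - v) * I T ^ v) := by gcongr
    _ = (β ^ q) ^ (1 - v) * (β ^ q) ^ v + (q * I 1) ^ (1 - v) * (q * I T) ^ v := by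
        rw [← rpow_add hβq, sub_add_cancel, rpow_one, mul_rpow hq0.le hI1.le,
          mul_rpow hq0.le (hI1.trans hI1T).le]
        linear_combination (-(I 1 ^ (1 - v) * I T ^ v)) * hqq
    _ < (β ^ q + q * I 1) ^ (1 - v) * (β ^ q + q * I T) ^ v := by
        refine rpow_mul_rpow_add_rpow_mul_rpow_lt hβq hβq.le (by positivity)
          (by nlinarith) hv0 hv1 ?_
        rw [div_self hβq.ne', mul_div_mul_left _ _ hq0.ne']
        exact ((one_lt_div hI1).2 hI1T).ne
    _ = kappa ρ q T ^ v := by rw [← hκ 1 one_pos, ← hκ T hT0, kappa_one, one_rpow, one_mul]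

lemma monotoneOn_Icc_of_hasDerivAt {f f' : ℝ → ℝ} {a b : ℝ} (hf : ∀ x, HasDerivAt f (f' x) x)
    (hf' : ∀ x ∈ Ioo a b, 0 ≤ f' x) : MonotoneOn f (Icc a b) :=
  monotoneOn_of_hasDerivWithinAt_nonneg (convex_Icc a b)
    (fun x _ => (hf x).continuousAt.continuousWithinAt) (fun x _ => (hf x).hasDerivWithinAt)
    (by rwa [interior_Icc])

lemma antitoneOn_Icc_of_hasDerivAt {f f' : ℝ → ℝ} {a b : ℝ} (hf : ∀ x, HasDerivAt f (f' x) x)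
    (hf' : ∀ x ∈ Ioo a b, f' x ≤ 0) : AntitoneOn f (Icc a b) :=
  antitoneOn_of_hasDerivWithinAt_nonpos (convex_Icc a b)
    (fun x _ => (hf x).continuousAt.continuousWithinAt) (fun x _ => (hf x).hasDerivWithinAt)
    (by rwa [interior_Icc])

lemma nonneg_of_hasDerivAt_of_deriv2_crossing {h h' h'' : ℝ → ℝ} {t : ℝ} (ht : 0 < t)
    (hd : ∀ x, HasDerivAt h (h' x) x) (hd' : ∀ x, HasDerivAt h' (h'' x) x)
    (h0 : h 0 = 0) (hht : h t = 0) (h't : h' t = 0) (h''t : 0 ≤ h'' t)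
    (hcross : ∀ x y, 0 < x → x ≤ y → 0 ≤ h'' x → 0 ≤ h'' y) {x : ℝ} (hx : 0 ≤ x) :
    0 ≤ h x := by
  have h'_mono : ∀ ξ, 0 < ξ → 0 ≤ h'' ξ → ∀ y, MonotoneOn h' (Icc ξ y) := fun ξ hξ hξ'' y =>
    monotoneOn_Icc_of_hasDerivAt hd' fun z hz => hcross ξ z hξ hz.1.le hξ''
  rcases le_or_gt t x with htx | hxt
  · have h'_nonneg : ∀ y ∈ Ioo t x, 0 ≤ h' y := fun y hy =>
      h't ▸ h'_mono t ht h''t x (left_mem_Icc.2 htx) (Ioo_subset_Icc_self hy) hy.1.le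
    have := monotoneOn_Icc_of_hasDerivAt hd h'_nonneg (left_mem_Icc.2 htx) (right_mem_Icc.2 htx) htx
    linarith
  by_cases hdip : ∃ z ∈ Ioo 0 x, h' z < 0
  · obtain ⟨z, hz, hz'⟩ := hdip
    -- if `h'` were positive somewhere on `[x, t]`, then `h'' > 0` somewhere in between, and from
    -- there on `h'` would increase to `h' t = 0`
    have h'_nonpos : ∀ y ∈ Ioo x t, h' y ≤ 0 := by
      intro y hy
      by_contra! hy'
      obtain ⟨ξ, hξ, hslope⟩ := exists_hasDerivAt_eq_slope h' h'' (hz.2.trans hy.1)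
        (fun u _ => (hd' u).continuousAt.continuousWithinAt) (fun u _ => hd' u)
      have hξ'' : 0 < h'' ξ := by
        rw [hslope]
        exact div_pos (by linarith) (by linarith [hz.2, hy.1])
      have := h'_mono ξ (hz.1.trans hξ.1) hξ''.le t ⟨hξ.2.le, hy.2.le⟩
        (right_mem_Icc.2 (hξ.2.trans hy.2).le) hy.2.le
      linarith
    have := antitoneOn_Icc_of_hasDerivAt hd h'_nonpos (left_mem_Icc.2 hxt.le)
      (right_mem_Icc.2 hxt.le) hxt.le
    linarith
  · push Not at hdip
    have := monotoneOn_Icc_of_hasDerivAt hd hdip (left_mem_Icc.2 hx) (right_mem_Icc.2 hx) hx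
    linarith

lemma mul_rpow_sub_two_le {w β q : ℝ} (hw : 0 < w) (hβ : 0 < β) (hq : 2 ≤ q) :
    (q - 1) * (β * w ^ (q - 2)) ≤ (q - 2) * w ^ (q - 1) + β ^ (q - 1) := by
  have hq1 : 0 < q - 1 := by linarith
  have h := geom_mean_le_arith_mean2_weighted (div_nonneg (by linarith : (0 : ℝ) ≤ q - 2) hq1.le)
    (div_nonneg zero_le_one hq1.le) (rpow_nonneg hw.le (q - 1)) (rpow_nonneg hβ.le (q - 1))
    (by field_simp; ring)
  rw [← rpow_mul hw.le, ← rpow_mul hβ.le, mul_div_cancel₀ _ hq1.ne', mul_one_div_cancel hq1.ne',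
    rpow_one] at h
  have := mul_le_mul_of_nonneg_left h hq1.le
  calc (q - 1) * (β * w ^ (q - 2)) = (q - 1) * (w ^ (q - 2) * β) := by ring
    _ ≤ _ := this
    _ = _ := by field_simp

lemma mul_rpow_le_mul_rpow_of_le {a b k c e x y : ℝ} (ha : 0 ≤ a) (hb : 0 ≤ b) (hk : 0 ≤ k)
    (he : 0 ≤ e) (hx : 0 < x) (hxy : x ≤ y) (h : k * (a * x + b) ^ e ≤ c * x ^ e) :
    k * (a * y + b) ^ e ≤ c * y ^ e := by
  have hy : 0 < y := hx.trans_le hxy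
  have hsplit : ∀ z, 0 < z → k * (a * z + b) ^ e = z ^ e * (k * (a + b / z) ^ e) := by
    intro z hz
    rw [mul_left_comm, ← mul_rpow hz.le (by positivity), mul_add, mul_div_cancel₀ _ hz.ne',
      mul_comm z]
  rw [hsplit x hx, mul_comm c] at h
  rw [hsplit y hy, mul_comm c]
  have hK := le_of_mul_le_mul_left h (rpow_pos_of_pos hx e)
  refine mul_le_mul_of_nonneg_left (le_trans ?_ hK) (rpow_nonneg hy.le e)
  gcongr

section Majorant

variable {ρ β q : ℝ}

lemma hasDerivAt_majorant_gap (hq : 1 ≤ q) (b θ x : ℝ) :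
    HasDerivAt (fun x => β ^ q + b * x + θ * x ^ q - (ρ * x + β) ^ q)
      (b + θ * (q * x ^ (q - 1)) - q * ρ * (ρ * x + β) ^ (q - 1)) x := by
  have hlin : HasDerivAt (fun x => ρ * x + β) ρ x := by
    simpa using ((hasDerivAt_id x).const_mul ρ).add_const β
  refine ((((hasDerivAt_id x).const_mul b).const_add (β ^ q)).add
    ((hasDerivAt_rpow_const (x := x) (p := q) (Or.inr hq)).const_mul θ) |>.sub
    (hlin.rpow_const (p := q) (Or.inr hq))).congr_deriv ?_
  ring

lemma hasDerivAt_majorant_gap_deriv (hq : 2 ≤ q) (b θ x : ℝ) :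
    HasDerivAt (fun x => b + θ * (q * x ^ (q - 1)) - q * ρ * (ρ * x + β) ^ (q - 1))
      (q * (q - 1) * (θ * x ^ (q - 2) - ρ ^ 2 * (ρ * x + β) ^ (q - 2))) x := by
  have hlin : HasDerivAt (fun x => ρ * x + β) ρ x := by
    simpa using ((hasDerivAt_id x).const_mul ρ).add_const β
  refine ((((hasDerivAt_rpow_const (x := x) (p := q - 1) (Or.inr (by linarith))).const_mul
    q).const_mul θ |>.const_add b).sub
    ((hlin.rpow_const (p := q - 1) (Or.inr (by linarith))).const_mul (q * ρ))).congr_deriv ?_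
  rw [show q - 1 - 1 = q - 2 by ring]
  ring

/-- The coefficient of `x ^ q` in the majorant of `(ρ x + β) ^ q` tangent at `x = t`. -/
noncomputable def tangentCoeff (ρ β q t : ℝ) : ℝ :=
  (q * ρ * t * (ρ * t + β) ^ (q - 1) - (ρ * t + β) ^ q + β ^ q) / ((q - 1) * t ^ q)

lemma sub_one_mul_tangentCoeff_mul_rpow {t : ℝ} (hq : 1 < q) (ht : 0 < t) :
    (q - 1) * tangentCoeff ρ β q t * t ^ q =
      q * ρ * t * (ρ * t + β) ^ (q - 1) - (ρ * t + β) ^ q + β ^ q := by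
  have : (q - 1) * t ^ q ≠ 0 := (mul_pos (by linarith) (rpow_pos_of_pos ht q)).ne'
  rw [tangentCoeff, mul_comm (q - 1), mul_assoc, div_mul_cancel₀ _ this]

lemma sq_mul_rpow_le_tangentCoeff_mul_rpow {t : ℝ} (hq : 2 ≤ q) (hρ : 0 ≤ ρ) (hβ : 0 < β)
    (ht : 0 < t) : ρ ^ 2 * (ρ * t + β) ^ (q - 2) ≤ tangentCoeff ρ β q t * t ^ (q - 2) := by
  have hw : 0 < ρ * t + β := by positivity
  have htq : t ^ q = t ^ (q - 2) * t * t := by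
    rw [show q = q - 2 + 1 + 1 by ring, rpow_add_one ht.ne', rpow_add_one ht.ne']
    ring_nf
  have hw1 : (ρ * t + β) ^ (q - 1) = (ρ * t + β) ^ (q - 2) * (ρ * t + β) := by
    rw [show q - 1 = q - 2 + 1 by ring, rpow_add_one hw.ne']
  have hw2 : (ρ * t + β) ^ q = (ρ * t + β) ^ (q - 2) * (ρ * t + β) * (ρ * t + β) := by
    rw [show q = q - 2 + 1 + 1 by ring, rpow_add_one hw.ne', rpow_add_one hw.ne']
    ring_nf
  have hβq : β ^ q = β ^ (q - 1) * β := by rw [rpow_sub_one hβ.ne', div_mul_cancel₀ _ hβ.ne']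
  -- after multiplying by `(q - 1) t ^ 2`, the claim is Young's inequality `mul_rpow_sub_two_le`
  have key : (q - 1) * t ^ 2 *
      (tangentCoeff ρ β q t * t ^ (q - 2) - ρ ^ 2 * (ρ * t + β) ^ (q - 2)) =
        β * ((q - 2) * (ρ * t + β) ^ (q - 1) + β ^ (q - 1) -
          (q - 1) * (β * (ρ * t + β) ^ (q - 2))) := by
    linear_combination (-(q - 1) * tangentCoeff ρ β q t) * htq +
      sub_one_mul_tangentCoeff_mul_rpow (ρ := ρ) (β := β) (q := q) (by linarith) ht +
      (q * ρ * t - (q - 2) * β) * hw1 - hw2 + hβq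
  have := mul_nonneg hβ.le (sub_nonneg.2 (mul_rpow_sub_two_le hw hβ hq))
  rw [← key] at this
  exact sub_nonneg.1 ((mul_nonneg_iff_of_pos_left (by nlinarith)).1 this)

lemma exists_majorant_rpow {t : ℝ} (hq : 2 ≤ q) (hρ : 0 ≤ ρ) (hβ : 0 < β) (ht : 0 < t) :
    ∃ b θ : ℝ, b * t + θ * t ^ q = (ρ * t + β) ^ q - β ^ q ∧
      ∀ x, 0 ≤ x → (ρ * x + β) ^ q ≤ β ^ q + b * x + θ * x ^ q := by
  set θ := tangentCoeff ρ β q t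
  set b := q * ρ * (ρ * t + β) ^ (q - 1) - q * θ * t ^ (q - 1) with hb
  have htq : t ^ q = t ^ (q - 1) * t := by rw [rpow_sub_one ht.ne', div_mul_cancel₀ _ ht.ne']
  have hbt : b * t + θ * t ^ q = (ρ * t + β) ^ q - β ^ q := by
    linear_combination t * hb + (q * θ) * htq -
      sub_one_mul_tangentCoeff_mul_rpow (ρ := ρ) (β := β) (q := q) (by linarith) ht
  refine ⟨b, θ, hbt, fun x hx => ?_⟩
  have hconvex : ∀ x, 0 < x →
      (0 ≤ q * (q - 1) * (θ * x ^ (q - 2) - ρ ^ 2 * (ρ * x + β) ^ (q - 2)) ↔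
        ρ ^ 2 * (ρ * x + β) ^ (q - 2) ≤ θ * x ^ (q - 2)) := fun x _ => by
    rw [mul_nonneg_iff_of_pos_left (by nlinarith), sub_nonneg]
  refine sub_nonneg.1 (nonneg_of_hasDerivAt_of_deriv2_crossing ht
    (hasDerivAt_majorant_gap (by linarith) b θ) (hasDerivAt_majorant_gap_deriv hq b θ)
    (by simp [zero_rpow (by linarith : q ≠ 0)]) (by linear_combination hbt)
    (by linear_combination hb)
    ((hconvex t ht).2 (sq_mul_rpow_le_tangentCoeff_mul_rpow hq hρ hβ ht))
    (fun x y hx hxy hx'' => ?_) hx)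
  -- the sign condition on the second derivative propagates to the right since
  -- `(ρ x + β) / x` decreases
  exact (hconvex y (hx.trans_le hxy)).2 (mul_rpow_le_mul_rpow_of_le hρ hβ.le (sq_nonneg ρ)
    (by linarith) hx hxy ((hconvex x hx).1 hx''))

end Majorant

def IsConstOrMinAtom {Ω : Type*} (μ : Ω → ℝ) (μs : ℝ) (f : Ω → ℝ) : Prop :=
  (∃ c : ℝ, ∀ x, f x = c) ∨ ∃ xs, μ xs = μs ∧ f xs ≠ 0 ∧ ∀ y, y ≠ xs → f y = 0

lemma isConstOrMinAtom_smul_iff {Ω : Type*} {μ : Ω → ℝ} {μs a : ℝ} (ha : a ≠ 0) (f : Ω → ℝ) :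
    IsConstOrMinAtom μ μs (a • f) ↔ IsConstOrMinAtom μ μs f := by
  have hconst : (∃ c : ℝ, ∀ x, a * f x = c) ↔ ∃ c : ℝ, ∀ x, f x = c :=
    ⟨fun ⟨c, hc⟩ => ⟨c / a, fun x => by rw [← hc x]; field_simp⟩,
      fun ⟨c, hc⟩ => ⟨a * c, fun x => by rw [hc x]⟩⟩
  simp only [IsConstOrMinAtom, Pi.smul_apply, smul_eq_mul, hconst, ne_eq, mul_eq_zero, ha,
    false_or]

section Expectation

variable {Ω : Type*} [Fintype Ω] {μ : Ω → ℝ}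

lemma expct_add (f g : Ω → ℝ) : expct μ (fun x => f x + g x) = expct μ f + expct μ g := by
  simp only [expct, mul_add, Finset.sum_add_distrib]

lemma expct_const_mul (c : ℝ) (f : Ω → ℝ) : expct μ (fun x => c * f x) = c * expct μ f := by
  simp only [expct, Finset.mul_sum]
  exact Finset.sum_congr rfl fun x _ => by ring

lemma expct_const_add (hμsum : ∑ x, μ x = 1) (c : ℝ) (f : Ω → ℝ) :
    expct μ (fun x => c + f x) = c + expct μ f := by
  rw [expct_add (fun _ => c) f]
  simp only [expct, ← Finset.sum_mul, hμsum, one_mul]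

lemma expct_mono (hμ : ∀ x, 0 ≤ μ x) {f g : Ω → ℝ} (h : ∀ x, f x ≤ g x) :
    expct μ f ≤ expct μ g :=
  Finset.sum_le_sum fun x _ => mul_le_mul_of_nonneg_left (h x) (hμ x)

lemma expct_nonneg (hμ : ∀ x, 0 ≤ μ x) {f : Ω → ℝ} (hf : ∀ x, 0 ≤ f x) : 0 ≤ expct μ f :=
  Finset.sum_nonneg fun x _ => mul_nonneg (hμ x) (hf x)

lemma expct_lt_expct (hμ : ∀ x, 0 < μ x) {f g : Ω → ℝ} (h : ∀ x, f x ≤ g x)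
    (hlt : ∃ x, f x < g x) : expct μ f < expct μ g := by
  obtain ⟨x, hx⟩ := hlt
  exact Finset.sum_lt_sum (fun y _ => mul_le_mul_of_nonneg_left (h y) (hμ y).le)
    ⟨x, Finset.mem_univ x, mul_lt_mul_of_pos_left hx (hμ x)⟩

lemma expct_comp_of_eq_zero_off (hμsum : ∑ x, μ x = 1) {g : Ω → ℝ} {xs : Ω}
    (h0 : ∀ y, y ≠ xs → g y = 0) (φ : ℝ → ℝ) :
    expct μ (fun x => φ (g x)) = μ xs * φ (g xs) + (1 - μ xs) * φ 0 := by
  classical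
  rw [expct, ← Finset.add_sum_erase _ _ (Finset.mem_univ xs),
    Finset.sum_congr rfl fun y hy => by rw [h0 y (Finset.ne_of_mem_erase hy)],
    ← Finset.sum_mul, Finset.sum_erase_eq_sub (Finset.mem_univ xs), hμsum]

lemma lt_one_of_two_le_card (hΩ : 2 ≤ Fintype.card Ω) (hμ : ∀ x, 0 < μ x)
    (hμsum : ∑ x, μ x = 1) (x : Ω) : μ x < 1 := by
  classical
  obtain ⟨y, hy⟩ := Fintype.exists_ne_of_one_lt_card (by omega) x
  rw [← hμsum, ← Finset.add_sum_erase _ _ (Finset.mem_univ x)]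
  exact lt_add_of_pos_right _ (Finset.sum_pos' (fun z _ => (hμ z).le)
    ⟨y, Finset.mem_erase.2 ⟨hy, Finset.mem_univ y⟩, hμ y⟩)

lemma eq_one_or_one_lt_expct_rpow (hμ : ∀ x, 0 < μ x) (hμsum : ∑ x, μ x = 1) {q : ℝ}
    (hq : 1 < q) {g : Ω → ℝ} (hg : ∀ x, 0 ≤ g x) (hEg : expct μ g = 1) :
    (∀ x, g x = 1) ∨ 1 < expct μ (fun x => g x ^ q) := by
  by_cases h : ∀ x, g x = 1
  · exact Or.inl h
  push Not at h
  obtain ⟨x₀, hx₀⟩ := h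
  have hbern : ∀ x, 1 - q + q * g x ≤ g x ^ q := fun x => by
    have := one_add_mul_self_le_rpow_one_add (by linarith [hg x] : -1 ≤ g x - 1) hq.le
    rw [add_sub_cancel] at this
    linarith
  have hbern₀ : 1 - q + q * g x₀ < g x₀ ^ q := by
    have := one_add_mul_self_lt_rpow_one_add (by linarith [hg x₀] : -1 ≤ g x₀ - 1)
      (sub_ne_zero.2 hx₀) hq
    rw [add_sub_cancel] at this
    linarith
  right
  calc 1 = expct μ (fun x => 1 - q + q * g x) := by
        rw [expct_const_add hμsum, expct_const_mul, hEg]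
        ring
    _ < _ := expct_lt_expct hμ hbern ⟨x₀, hbern₀⟩

lemma expct_rpow_lt_or_forall_eq_zero_or_eq (hμ : ∀ x, 0 < μ x) {q T : ℝ} (hq : 1 < q)
    {g : Ω → ℝ} (hg : ∀ x, 0 ≤ g x) (hgT : ∀ x, g x ≤ T) (hEg : expct μ g = 1) :
    expct μ (fun x => g x ^ q) < T ^ (q - 1) ∨ ∀ x, g x = 0 ∨ g x = T := by
  by_cases h : ∀ x, g x = 0 ∨ g x = T
  · exact Or.inr h
  push Not at h
  obtain ⟨x₀, hx₀, hx₀T⟩ := h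
  have hsplit : ∀ x, 0 < g x → g x ^ q = g x ^ (q - 1) * g x := fun x hx => by
    rw [rpow_sub_one hx.ne', div_mul_cancel₀ _ hx.ne']
  have hle : ∀ x, g x ^ q ≤ T ^ (q - 1) * g x := by
    intro x
    rcases (hg x).eq_or_lt with h | h
    · simp [← h, zero_rpow (by linarith : q ≠ 0)]
    · rw [hsplit x h]
      exact mul_le_mul_of_nonneg_right (rpow_le_rpow h.le (hgT x) (by linarith)) h.le
  have hpos : 0 < g x₀ := (hg x₀).lt_of_ne' hx₀
  have hlt : g x₀ ^ q < T ^ (q - 1) * g x₀ := by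
    rw [hsplit x₀ hpos]
    exact mul_lt_mul_of_pos_right
      (rpow_lt_rpow hpos.le ((hgT x₀).lt_of_ne hx₀T) (by linarith)) hpos
  left
  calc expct μ (fun x => g x ^ q) < expct μ (fun x => T ^ (q - 1) * g x) :=
        expct_lt_expct hμ hle ⟨x₀, hlt⟩
    _ = T ^ (q - 1) := by rw [expct_const_mul, hEg, mul_one]

lemma exists_eq_zero_off_of_forall_eq_zero_or_eq (hμ : ∀ x, 0 < μ x) {μs T : ℝ}
    (hμs_le : ∀ x, μs ≤ μ x) (hT0 : 0 < T) (hμsT : μs * T = 1) {g : Ω → ℝ}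
    (h01 : ∀ x, g x = 0 ∨ g x = T) (hEg : expct μ g = 1) :
    ∃ xs, μ xs = μs ∧ g xs = T ∧ ∀ y, y ≠ xs → g y = 0 := by
  classical
  obtain ⟨xs, hxs⟩ : ∃ xs, g xs = T := by
    by_contra! h
    have : expct μ g = 0 :=
      Finset.sum_eq_zero fun x _ => by rw [(h01 x).resolve_right (h x), mul_zero]
    linarith
  have hterm : ∀ y, 0 ≤ μ y * g y := fun y =>
    mul_nonneg (hμ y).le (by rcases h01 y with h | h <;> rw [h]; exact hT0.le)
  have hsplit := Finset.add_sum_erase Finset.univ (fun y => μ y * g y) (Finset.mem_univ xs)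
  rw [← expct, hEg, hxs] at hsplit
  have hrest := Finset.sum_nonneg fun y (_ : y ∈ Finset.univ.erase xs) => hterm y
  have hmass := mul_le_mul_of_nonneg_right (hμs_le xs) hT0.le
  refine ⟨xs, mul_right_cancel₀ hT0.ne' (by linarith), hxs, fun y hy => ?_⟩
  have := (Finset.sum_eq_zero_iff_of_nonneg fun y _ => hterm y).1 (by linarith) y
    (Finset.mem_erase.2 ⟨hy, Finset.mem_univ y⟩)
  exact (mul_eq_zero.1 this).resolve_left (hμ y).ne'

lemma le_of_expct_eq_one (hμ : ∀ x, 0 < μ x) {μs T : ℝ} (hμs_le : ∀ x, μs ≤ μ x) (hT0 : 0 < T)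
    (hμsT : μs * T = 1) {g : Ω → ℝ} (hg : ∀ x, 0 ≤ g x) (hEg : expct μ g = 1) (x : Ω) :
    g x ≤ T := by
  have h1 : μ x * g x ≤ 1 :=
    hEg ▸ Finset.single_le_sum (fun y _ => mul_nonneg (hμ y).le (hg y)) (Finset.mem_univ x)
  have h2 := mul_le_mul_of_nonneg_right (hμs_le x) (hg x)
  have hμs0 : 0 < μs := pos_of_mul_pos_left (hμsT ▸ one_pos) hT0.le
  nlinarith

lemma expct_noise_rpow_le_kappa (hμ : ∀ x, 0 ≤ μ x) (hμsum : ∑ x, μ x = 1) {q ρ t : ℝ}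
    (hq : 2 ≤ q) (hρ0 : 0 ≤ ρ) (hρ1 : ρ < 1) (ht : 0 < t) {g : Ω → ℝ} (hg : ∀ x, 0 ≤ g x)
    (hEg : expct μ g = 1) (hm : expct μ (fun x => g x ^ q) = t ^ (q - 1)) :
    expct μ (fun x => (ρ * g x + (1 - ρ)) ^ q) ≤ kappa ρ q t := by
  obtain ⟨b, θ, hbt, hmaj⟩ := exists_majorant_rpow hq hρ0 (by linarith : 0 < 1 - ρ) ht
  have htq : t ^ q = t ^ (q - 1) * t := by rw [rpow_sub_one ht.ne', div_mul_cancel₀ _ ht.ne']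
  calc expct μ (fun x => (ρ * g x + (1 - ρ)) ^ q)
      ≤ expct μ (fun x => (1 - ρ) ^ q + (b * g x + θ * g x ^ q)) :=
        expct_mono hμ fun x => (hmaj _ (hg x)).trans_eq (by ring)
    _ = (1 - ρ) ^ q + b + θ * t ^ (q - 1) := by
        rw [expct_const_add hμsum, expct_add, expct_const_mul, expct_const_mul, hEg, hm]
        ring
    _ = kappa ρ q t := by
        rw [kappa]
        field_simp
        linear_combination hbt - θ * htq

lemma expct_noise_rpow_lt (hμ : ∀ x, 0 ≤ μ x) (hμsum : ∑ x, μ x = 1) {q ρ T : ℝ} (hq : 2 ≤ q)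
    (hρ0 : 0 < ρ) (hρ1 : ρ < 1) (hT : 1 < T) {g : Ω → ℝ} (hg : ∀ x, 0 ≤ g x)
    (hEg : expct μ g = 1) (hm1 : 1 < expct μ (fun x => g x ^ q))
    (hmT : expct μ (fun x => g x ^ q) < T ^ (q - 1)) :
    expct μ (fun x => (ρ * g x + (1 - ρ)) ^ q) <
      expct μ (fun x => g x ^ q) ^ noiseExponent ρ q T := by
  set m := expct μ (fun x => g x ^ q)
  have hm0 : 0 < m := by linarith
  have hq1 : 0 < q - 1 := by linarith
  have hlogT : 0 < log T := log_pos hT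
  set v := log m / ((q - 1) * log T)
  have hv0 : 0 < v := div_pos (log_pos hm1) (by positivity)
  have hv1 : v < 1 := by
    rw [div_lt_one (by positivity), ← log_rpow (by linarith)]
    exact log_lt_log hm0 hmT
  have htm : (T ^ v) ^ (q - 1) = m := by
    rw [← rpow_mul (by linarith), rpow_def_of_pos (by linarith),
      show log T * (v * (q - 1)) = log m by simp only [v]; field_simp, exp_log hm0]
  calc expct μ (fun x => (ρ * g x + (1 - ρ)) ^ q)
      ≤ kappa ρ q (T ^ v) :=
        expct_noise_rpow_le_kappa hμ hμsum hq hρ0.le hρ1 (by positivity) hg hEg htm.symm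
    _ < kappa ρ q T ^ v := kappa_rpow_lt (by linarith) hρ0 hρ1 hT hv0 hv1
    _ = m ^ noiseExponent ρ q T := by
        rw [rpow_def_of_pos (kappa_pos hρ0.le hρ1 hT.le), rpow_def_of_pos hm0, noiseExponent]
        simp only [v]
        congr 1
        ring

lemma expct_noise_rpow_eq_iff (hμ : ∀ x, 0 < μ x) (hμsum : ∑ x, μ x = 1) {μs T q ρ : ℝ}
    (hμs_le : ∀ x, μs ≤ μ x) (hT : 1 < T) (hμsT : μs * T = 1) (hq : 2 ≤ q) (hρ0 : 0 < ρ)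
    (hρ1 : ρ < 1) {g : Ω → ℝ} (hg : ∀ x, 0 ≤ g x) (hEg : expct μ g = 1) :
    expct μ (fun x => (ρ * g x + (1 - ρ)) ^ q) =
        expct μ (fun x => g x ^ q) ^ noiseExponent ρ q T ↔ IsConstOrMinAtom μ μs g := by
  have hT0 : 0 < T := by linarith
  constructor
  · intro heq
    rcases eq_one_or_one_lt_expct_rpow hμ hμsum (q := q) (by linarith) hg hEg with h1 | hm1
    · exact Or.inl ⟨1, h1⟩
    rcases expct_rpow_lt_or_forall_eq_zero_or_eq hμ (q := q) (by linarith) hg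
      (le_of_expct_eq_one hμ hμs_le hT0 hμsT hg hEg) hEg with hmT | h01
    · exact absurd heq
        (expct_noise_rpow_lt (fun x => (hμ x).le) hμsum hq hρ0 hρ1 hT hg hEg hm1 hmT).ne
    obtain ⟨xs, hxs, hgxs, h0⟩ :=
      exists_eq_zero_off_of_forall_eq_zero_or_eq hμ hμs_le hT0 hμsT h01 hEg
    exact Or.inr ⟨xs, hxs, hgxs ▸ hT0.ne', h0⟩
  · rintro (⟨c, hc⟩ | ⟨xs, hxs, -, h0⟩)
    · have hc1 : c = 1 := by
        rw [← hEg, expct]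
        simp [hc, ← Finset.sum_mul, hμsum]
      simp [expct, hc, hc1, hμsum]
    · have hμs : μ xs = 1 / T := by rw [hxs, eq_one_div_of_mul_eq_one_left hμsT]
      have hgxs : g xs = T := by
        have h := expct_comp_of_eq_zero_off hμsum h0 id
        simp only [id, mul_zero, add_zero, hEg, hμs] at h
        field_simp at h
        exact h.symm
      rw [expct_comp_of_eq_zero_off hμsum h0 fun u => (ρ * u + (1 - ρ)) ^ q,
        expct_comp_of_eq_zero_off hμsum h0 fun u => u ^ q, hgxs, hμs, zero_rpow (by linarith)]
      simp only [mul_zero, add_zero, zero_add]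
      rw [show 1 / T * T ^ q = T ^ (q - 1) by rw [rpow_sub_one hT0.ne']; ring,
        rpow_noiseExponent hρ0.le hρ1 (by linarith) hT, kappa]
      ring

end Expectation

section Extremal

variable {Ω : Type*} [Fintype Ω] {μ : Ω → ℝ}

def IsNoiseExtremal (μ : Ω → ℝ) (q ρ lam : ℝ) (f : Ω → ℝ) : Prop :=
  qNorm μ q (noiseOp μ ρ f) = qNorm μ 1 f ^ (1 - lam) * qNorm μ q f ^ lam

lemma qNorm_nonneg (hμ : ∀ x, 0 ≤ μ x) (q : ℝ) (f : Ω → ℝ) : 0 ≤ qNorm μ q f :=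
  rpow_nonneg (Finset.sum_nonneg fun x _ => mul_nonneg (hμ x) (rpow_nonneg (abs_nonneg _) _)) _

lemma qNorm_smul (hμ : ∀ x, 0 ≤ μ x) {q a : ℝ} (hq : q ≠ 0) (ha : 0 ≤ a) (f : Ω → ℝ) :
    qNorm μ q (a • f) = a * qNorm μ q f := by
  have hsum : ∑ x, μ x * |(a • f) x| ^ q = a ^ q * ∑ x, μ x * |f x| ^ q := by
    rw [Finset.mul_sum]
    refine Finset.sum_congr rfl fun x _ => ?_
    rw [Pi.smul_apply, smul_eq_mul, abs_mul, abs_of_nonneg ha, mul_rpow ha (abs_nonneg _)]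
    ring
  rw [qNorm, hsum, mul_rpow (rpow_nonneg ha q)
      (Finset.sum_nonneg fun x _ => mul_nonneg (hμ x) (rpow_nonneg (abs_nonneg _) _)),
    ← rpow_mul ha, mul_one_div_cancel hq, rpow_one, qNorm]

lemma noiseOp_smul (ρ a : ℝ) (f : Ω → ℝ) : noiseOp μ ρ (a • f) = a • noiseOp μ ρ f := by
  have : expct μ (a • f) = a * expct μ f := expct_const_mul a f
  funext x
  simp only [noiseOp, this, Pi.smul_apply, smul_eq_mul]
  ring

lemma isNoiseExtremal_smul_iff (hμ : ∀ x, 0 ≤ μ x) {q ρ lam a : ℝ} (hq : 0 < q) (ha : 0 < a)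
    (f : Ω → ℝ) : IsNoiseExtremal μ q ρ lam (a • f) ↔ IsNoiseExtremal μ q ρ lam f := by
  unfold IsNoiseExtremal
  rw [noiseOp_smul, qNorm_smul hμ hq.ne' ha.le, qNorm_smul hμ one_ne_zero ha.le,
    qNorm_smul hμ hq.ne' ha.le, mul_rpow ha.le (qNorm_nonneg hμ _ _),
    mul_rpow ha.le (qNorm_nonneg hμ _ _), mul_mul_mul_comm, ← rpow_add ha, sub_add_cancel,
    rpow_one]
  exact mul_right_inj' ha.ne'

lemma isNoiseExtremal_zero {q ρ lam : ℝ} (hq : q ≠ 0) : IsNoiseExtremal μ q ρ lam 0 := by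
  have hnorm : ∀ r : ℝ, r ≠ 0 → qNorm μ r 0 = 0 := fun r hr => by
    simp [qNorm, zero_rpow hr, zero_rpow (inv_ne_zero hr)]
  have hT : noiseOp μ ρ 0 = 0 := funext fun x => by simp [noiseOp, expct]
  unfold IsNoiseExtremal
  rw [hT, hnorm q hq, hnorm 1 one_ne_zero]
  rcases eq_or_ne lam 0 with h | h
  · simp [h]
  · simp [zero_rpow h]

lemma isNoiseExtremal_iff_of_expct_eq_one (hμ : ∀ x, 0 ≤ μ x) {q ρ lam : ℝ} (hq : 0 < q)
    (hρ0 : 0 ≤ ρ) (hρ1 : ρ ≤ 1) {g : Ω → ℝ} (hg : ∀ x, 0 ≤ g x) (hEg : expct μ g = 1) :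
    IsNoiseExtremal μ q ρ lam g ↔
      expct μ (fun x => (ρ * g x + (1 - ρ)) ^ q) = expct μ (fun x => g x ^ q) ^ lam := by
  have hTg : ∀ x, 0 ≤ ρ * g x + (1 - ρ) := fun x => by nlinarith [hg x]
  have hN1 : qNorm μ 1 g = 1 := by
    simp only [qNorm, rpow_one, div_one, abs_of_nonneg (hg _)]
    exact hEg
  have hNq : qNorm μ q g = expct μ (fun x => g x ^ q) ^ (1 / q) := by
    simp only [qNorm, abs_of_nonneg (hg _)]
    rfl
  have hL : qNorm μ q (noiseOp μ ρ g) = expct μ (fun x => (ρ * g x + (1 - ρ)) ^ q) ^ (1 / q) := by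
    simp only [qNorm, noiseOp, hEg, mul_one, abs_of_nonneg (hTg _)]
    rfl
  unfold IsNoiseExtremal
  rw [hL, hN1, hNq, one_rpow, one_mul, ← rpow_mul (expct_nonneg hμ fun x => rpow_nonneg (hg x) q),
    mul_comm, rpow_mul (expct_nonneg hμ fun x => rpow_nonneg (hg x) q)]
  exact rpow_left_inj (expct_nonneg hμ fun x => rpow_nonneg (hTg x) q)
    (rpow_nonneg (expct_nonneg hμ fun x => rpow_nonneg (hg x) q) _) (one_div_ne_zero hq.ne')

end Extremal

theorem stmt1 {Ω : Type*} [Fintype Ω] (hΩ : 2 ≤ Fintype.card Ω)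
    (μ : Ω → ℝ) (hμpos : ∀ x, 0 < μ x) (hμsum : ∑ x, μ x = 1)
    (μs : ℝ) (hμs_le : ∀ x, μs ≤ μ x) (hμs_mem : ∃ x, μ x = μs)
    (q ρ lam : ℝ) (hq : 2 ≤ q) (hρ0 : 0 < ρ) (hρ1 : ρ < 1)
    (hlam : lam = Real.log (μs * (1 + ρ * (1 / μs - 1)) ^ q + (1 - μs) * (1 - ρ) ^ q) /
      ((q - 1) * Real.log (1 / μs)))
    (f : Ω → ℝ) (hf : ∀ x, 0 ≤ f x) :
    qNorm μ q (noiseOp μ ρ f) = qNorm μ 1 f ^ (1 - lam) * qNorm μ q f ^ lam ↔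
      (∃ c : ℝ, ∀ x, f x = c) ∨
        (∃ xs, μ xs = μs ∧ f xs ≠ 0 ∧ ∀ y, y ≠ xs → f y = 0) := by
  obtain ⟨x₀, rfl⟩ := hμs_mem
  have hμ : ∀ x, 0 ≤ μ x := fun x => (hμpos x).le
  have hT : 1 < 1 / μ x₀ :=
    (one_lt_div (hμpos x₀)).2 (lt_one_of_two_le_card hΩ hμpos hμsum x₀)
  rw [← kappa_one_div] at hlam
  change lam = noiseExponent ρ q (1 / μ x₀) at hlam
  change IsNoiseExtremal μ q ρ lam f ↔ IsConstOrMinAtom μ (μ x₀) f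
  rcases (expct_nonneg hμ hf).eq_or_lt with h0 | hpos
  · have hf0 : f = 0 := funext fun x =>
      (mul_eq_zero.1 ((Finset.sum_eq_zero_iff_of_nonneg fun y _ => mul_nonneg (hμ y) (hf y)).1
        h0.symm x (Finset.mem_univ x))).resolve_left (hμpos x).ne'
    subst hf0
    exact iff_of_true (isNoiseExtremal_zero (by linarith)) (Or.inl ⟨0, fun _ => rfl⟩)
  set a := expct μ f
  have hfg : f = a • (a⁻¹ • f) := by rw [smul_smul, mul_inv_cancel₀ hpos.ne', one_smul]
  have hg : ∀ x, 0 ≤ (a⁻¹ • f) x := fun x => mul_nonneg (inv_nonneg.2 hpos.le) (hf x)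
  have hEg : expct μ (a⁻¹ • f) = 1 := (expct_const_mul a⁻¹ f).trans (inv_mul_cancel₀ hpos.ne')
  rw [hfg, isNoiseExtremal_smul_iff hμ (by linarith) hpos, isConstOrMinAtom_smul_iff hpos.ne',
    isNoiseExtremal_iff_of_expct_eq_one hμ (by linarith) hρ0.le hρ1.le hg hEg, hlam]
  exact expct_noise_rpow_eq_iff hμpos hμsum hμs_le hT (mul_one_div_cancel (hμpos x₀).ne') hq hρ0
    hρ1 hg hEg
end

section
/- Let −μ*/(1−μ*) ≤ ρ < 0 and set λ := −ln(1−ρ) / ln(1−μ*). Then for every nonnegative function f : Ω → ℝ it holds that ‖T_ρ f‖_∞ ≤ ‖f‖_1^{1−λ} · ‖f‖_∞^{λ}. Moreover, if −μ*/(1−μ*) < ρ < 0, equality holds if and only if f is constant, or there exists a point x* with μ(x*) = μ* such that f(x*) = 0 and f is constant on Ω∖{x*}. -/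
open Finset

/-- The `∞`-norm `max_{x∈Ω} |f(x)|`. -/
noncomputable def infNorm {Ω : Type*} [Fintype Ω] (f : Ω → ℝ) : ℝ :=
  ⨆ x, |f x|

/-!
Write `m`, `M` for the minimum and maximum of `f` and `E = E_μ[f]`. Since `ρ < 0` and
`ρ ≥ -μ*/(1-μ*)`, `T_ρ f` is nonnegative and maximal where `f` is minimal, so
`‖T_ρ f‖_∞ = ρ m + (1-ρ) E`, while `‖f‖_1 = E` and `‖f‖_∞ = M`. The constraints linking
these numbers are `μ* M ≤ E ≤ μ* m + (1-μ*) M`. Normalising `M = 1`, the worst case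
`m = max(0, (E - (1-μ*))/μ*)` makes `ρ m + (1-ρ) E` piecewise linear in `E`, with vertices
`(0, 0)`, `(1-μ*, (1-μ*)(1-ρ))` and `(1, 1)`. The exponent `λ` is exactly the one for which
`(1-μ*)^(1-λ) = (1-μ*)(1-ρ)`, so all three vertices lie on the concave curve `E ↦ E^(1-λ)`, which
therefore dominates. Strict concavity (when `λ < 1`) forces equality to happen at a vertex.
-/

open Real

section Scalar

lemma mul_le_rpow_of_le_of_rpow_eq {c r p t : ℝ} (ht : 0 < t) (htc : t ≤ c) (hp : p ≤ 1)
    (hc : c ^ p = c * r) : r * t ≤ t ^ p := by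
  have hr : r = c ^ (p - 1) := by
    rw [rpow_sub_one (ht.trans_le htc).ne', hc, mul_div_cancel_left₀ r (ht.trans_le htc).ne']
  calc r * t ≤ t ^ (p - 1) * t :=
        mul_le_mul_of_nonneg_right (hr ▸ rpow_le_rpow_of_nonpos ht htc (by linarith)) ht.le
    _ = t ^ p := by rw [rpow_sub_one ht.ne']; field_simp

lemma mul_lt_rpow_of_lt_of_rpow_eq {c r p t : ℝ} (ht : 0 < t) (htc : t < c) (hp : p < 1)
    (hc : c ^ p = c * r) : r * t < t ^ p := by
  have hr : r = c ^ (p - 1) := by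
    rw [rpow_sub_one (ht.trans htc).ne', hc, mul_div_cancel_left₀ r (ht.trans htc).ne']
  calc r * t < t ^ (p - 1) * t :=
        mul_lt_mul_of_pos_right (hr ▸ rpow_lt_rpow_of_neg ht htc (by linarith)) ht
    _ = t ^ p := by rw [rpow_sub_one ht.ne']; field_simp

lemma rpow_chord_le {p x y t : ℝ} (hp0 : 0 ≤ p) (hp1 : p ≤ 1) (hx : 0 ≤ x) (hxt : x ≤ t)
    (hty : t ≤ y) (hxy : x < y) :
    ((y - t) * x ^ p + (t - x) * y ^ p) / (y - x) ≤ t ^ p := by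
  have hyx : 0 < y - x := sub_pos.2 hxy
  have hw : (y - t) / (y - x) * x + (t - x) / (y - x) * y = t := by field_simp; ring
  have h := (concaveOn_rpow hp0 hp1).2 (Set.mem_Ici.2 hx) (Set.mem_Ici.2 (hx.trans hxy.le))
    (div_nonneg (sub_nonneg.2 hty) hyx.le) (div_nonneg (sub_nonneg.2 hxt) hyx.le)
    (by field_simp; ring)
  simp only [smul_eq_mul, hw] at h
  calc ((y - t) * x ^ p + (t - x) * y ^ p) / (y - x)
      = (y - t) / (y - x) * x ^ p + (t - x) / (y - x) * y ^ p := by ring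
    _ ≤ t ^ p := h

lemma rpow_chord_lt {p x y t : ℝ} (hp0 : 0 < p) (hp1 : p < 1) (hx : 0 ≤ x) (hxt : x < t)
    (hty : t < y) :
    ((y - t) * x ^ p + (t - x) * y ^ p) / (y - x) < t ^ p := by
  have hxy : x < y := hxt.trans hty
  have hyx : 0 < y - x := sub_pos.2 hxy
  have hw : (y - t) / (y - x) * x + (t - x) / (y - x) * y = t := by field_simp; ring
  have h := (strictConcaveOn_rpow hp0 hp1).2 (Set.mem_Ici.2 hx) (Set.mem_Ici.2 (hx.trans hxy.le))
    hxy.ne (div_pos (sub_pos.2 hty) hyx) (div_pos (sub_pos.2 hxt) hyx) (by field_simp; ring)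
  simp only [smul_eq_mul, hw] at h
  calc ((y - t) * x ^ p + (t - x) * y ^ p) / (y - x)
      = (y - t) / (y - x) * x ^ p + (t - x) / (y - x) * y ^ p := by ring
    _ < t ^ p := h

lemma rpow_one_sub_eq_mul_of_eq_neg_log_div_log {c r lam : ℝ} (hc0 : 0 < c) (hc1 : c ≠ 1)
    (hr : 0 < r) (hlam : lam = -(log r / log c)) : c ^ (1 - lam) = c * r := by
  rw [hlam, sub_neg_eq_add, log_div_log, rpow_add hc0, rpow_one, rpow_logb hc0 hc1 hr]

lemma pos_of_rpow_one_sub_eq_mul {c r lam : ℝ} (hc0 : 0 < c) (hc1 : c < 1)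
    (h : c ^ (1 - lam) = c * r) (hr : 1 < r) : 0 < lam := by
  have := (rpow_lt_rpow_left_iff_of_base_lt_one hc0 hc1).1
    (show c ^ (1 : ℝ) < c ^ (1 - lam) by rw [rpow_one, h]; nlinarith)
  linarith

lemma le_one_of_rpow_one_sub_eq_mul {c r lam : ℝ} (hc0 : 0 < c) (hc1 : c < 1)
    (h : c ^ (1 - lam) = c * r) (hcr : c * r ≤ 1) : lam ≤ 1 := by
  have := (rpow_le_rpow_left_iff_of_base_lt_one hc0 hc1).1
    (show c ^ (1 - lam) ≤ c ^ (0 : ℝ) by rwa [rpow_zero, h])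
  linarith

lemma lt_one_of_rpow_one_sub_eq_mul {c r lam : ℝ} (hc0 : 0 < c) (hc1 : c < 1)
    (h : c ^ (1 - lam) = c * r) (hcr : c * r < 1) : lam < 1 := by
  have := (rpow_lt_rpow_left_iff_of_base_lt_one hc0 hc1).1
    (show c ^ (1 - lam) < c ^ (0 : ℝ) by rwa [rpow_zero, h])
  linarith

lemma neg_div_one_sub_le_iff {a b : ℝ} (ha : a < 1) :
    -(a / (1 - a)) ≤ b ↔ (1 - a) * (1 - b) ≤ 1 := by
  rw [neg_le, le_div_iff₀ (sub_pos.2 ha)]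
  constructor <;> intro h <;> linarith

lemma neg_div_one_sub_lt_iff {a b : ℝ} (ha : a < 1) :
    -(a / (1 - a)) < b ↔ (1 - a) * (1 - b) < 1 := by
  rw [neg_lt, lt_div_iff₀ (sub_pos.2 ha)]
  constructor <;> intro h <;> linarith

end Scalar

section NoiseBound

variable {μs ρ p lam m t E M : ℝ}

lemma noise_le_chord (hμs : 0 < μs) (hρ : ρ ≤ 0) (hp : (1 - μs) ^ p = (1 - μs) * (1 - ρ))
    (ht : t ≤ μs * m + (1 - μs)) :
    ρ * m + (1 - ρ) * t
      ≤ ((1 - t) * (1 - μs) ^ p + (t - (1 - μs)) * 1 ^ p) / (1 - (1 - μs)) := by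
  have hm : (t - (1 - μs)) / μs ≤ m := by rw [div_le_iff₀ hμs]; linarith
  calc ρ * m + (1 - ρ) * t ≤ ρ * ((t - (1 - μs)) / μs) + (1 - ρ) * t := by
        gcongr ?_ + _; exact mul_le_mul_of_nonpos_left hm hρ
    _ = _ := by rw [hp, one_rpow, sub_sub_cancel]; field_simp; ring

lemma noise_le_rpow_normalized (hμs0 : 0 < μs) (hμs1 : μs < 1) (hρ : ρ ≤ 0)
    (hp : (1 - μs) ^ p = (1 - μs) * (1 - ρ)) (hp0 : 0 ≤ p) (hp1 : p ≤ 1)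
    (hm : 0 ≤ m) (hmt : m ≤ t) (ht0 : 0 < t) (ht : t ≤ μs * m + (1 - μs)) :
    ρ * m + (1 - ρ) * t ≤ t ^ p := by
  rcases le_total t (1 - μs) with htc | htc
  · calc ρ * m + (1 - ρ) * t ≤ (1 - ρ) * t := by nlinarith
      _ ≤ t ^ p := mul_le_rpow_of_le_of_rpow_eq ht0 htc hp1 hp
  · calc ρ * m + (1 - ρ) * t ≤ _ := noise_le_chord hμs0 hρ hp ht
      _ ≤ t ^ p := rpow_chord_le hp0 hp1 (by linarith) htc (by nlinarith) (by linarith)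

lemma eq_of_noise_eq_rpow_normalized (hμs0 : 0 < μs) (hμs1 : μs < 1) (hρ : ρ < 0)
    (hp : (1 - μs) ^ p = (1 - μs) * (1 - ρ)) (hp0 : 0 < p) (hp1 : p < 1)
    (hm : 0 ≤ m) (hmt : m ≤ t) (ht0 : 0 < t) (ht : t ≤ μs * m + (1 - μs))
    (heq : ρ * m + (1 - ρ) * t = t ^ p) :
    m = 1 ∨ (m = 0 ∧ t = 1 - μs) := by
  have hm1 : m ≤ 1 := by nlinarith
  rcases lt_trichotomy t (1 - μs) with htc | rfl | htc
  · have := mul_lt_rpow_of_lt_of_rpow_eq ht0 htc hp1 hp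
    nlinarith
  · refine Or.inr ⟨(mul_eq_zero.1 (?_ : ρ * m = 0)).resolve_left hρ.ne, rfl⟩
    linarith
  · rcases (show t ≤ 1 by nlinarith).eq_or_lt with rfl | ht1
    · exact Or.inl (le_antisymm hm1 (by nlinarith))
    · have := noise_le_chord hμs0 hρ.le hp ht
      have := rpow_chord_lt hp0 hp1 (by linarith) htc ht1
      linarith

lemma rpow_one_sub_mul_rpow (hE : 0 ≤ E) (hM : 0 < M) :
    E ^ (1 - lam) * M ^ lam = M * (E / M) ^ (1 - lam) := by
  rw [div_rpow hE hM.le, rpow_sub hM, rpow_one]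
  field_simp

lemma noise_le_of_moment_bounds (hμs0 : 0 < μs) (hμs1 : μs < 1) (hρ : ρ ≤ 0)
    (hexp : (1 - μs) ^ (1 - lam) = (1 - μs) * (1 - ρ)) (hlam0 : 0 ≤ lam) (hlam1 : lam ≤ 1)
    (hm : 0 ≤ m) (hmE : m ≤ E) (hEM : E ≤ μs * m + (1 - μs) * M) (hME : μs * M ≤ E) :
    ρ * m + (1 - ρ) * E ≤ E ^ (1 - lam) * M ^ lam := by
  rcases (show 0 ≤ M by nlinarith).eq_or_lt with rfl | hM
  · obtain rfl : E = 0 := by nlinarith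
    obtain rfl : m = 0 := by linarith
    simp only [mul_zero, add_zero]
    positivity
  have hE : 0 < E := lt_of_lt_of_le (by positivity) hME
  have key := noise_le_rpow_normalized (m := m / M) (t := E / M) hμs0 hμs1 hρ hexp
    (by linarith) (by linarith) (by positivity) (by gcongr) (by positivity)
    (by rw [div_le_iff₀ hM]; field_simp; linarith)
  calc ρ * m + (1 - ρ) * E = M * (ρ * (m / M) + (1 - ρ) * (E / M)) := by field_simp
    _ ≤ M * (E / M) ^ (1 - lam) := by gcongr
    _ = E ^ (1 - lam) * M ^ lam := (rpow_one_sub_mul_rpow hE.le hM).symm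

lemma noise_eq_iff_of_moment_bounds (hμs0 : 0 < μs) (hμs1 : μs < 1) (hρ : ρ < 0)
    (hexp : (1 - μs) ^ (1 - lam) = (1 - μs) * (1 - ρ)) (hlam0 : 0 < lam) (hlam1 : lam < 1)
    (hm : 0 ≤ m) (hmE : m ≤ E) (hEM : E ≤ μs * m + (1 - μs) * M) (hME : μs * M ≤ E) :
    ρ * m + (1 - ρ) * E = E ^ (1 - lam) * M ^ lam ↔
      m = M ∨ (m = 0 ∧ 0 < M ∧ E = (1 - μs) * M) := by
  constructor
  · intro heq
    rcases (show 0 ≤ M by nlinarith).eq_or_lt with rfl | hM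
    · exact Or.inl (by nlinarith)
    have hE : 0 < E := lt_of_lt_of_le (by positivity) hME
    have key := eq_of_noise_eq_rpow_normalized (m := m / M) (t := E / M) hμs0 hμs1 hρ hexp
      (by linarith) (by linarith) (by positivity) (by gcongr) (by positivity)
      (by rw [div_le_iff₀ hM]; field_simp; linarith)
      (by rw [rpow_one_sub_mul_rpow hE.le hM] at heq; field_simp; linarith)
    rcases key with h | ⟨h0, h1⟩
    · exact Or.inl ((div_eq_one_iff_eq hM.ne').1 h)
    · exact Or.inr ⟨(div_eq_zero_iff.1 h0).resolve_right hM.ne', hM, (div_eq_iff hM.ne').1 h1⟩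
  · rintro (rfl | ⟨rfl, hM, rfl⟩)
    · obtain rfl : E = m := by nlinarith
      rw [← rpow_add' hm (by norm_num), sub_add_cancel, rpow_one]
      ring
    · rw [rpow_one_sub_mul_rpow (by positivity) hM, mul_div_cancel_right₀ _ hM.ne', hexp]
      ring

end NoiseBound

section FiniteSpace

variable {Ω : Type*} [Fintype Ω] {μ f : Ω → ℝ} {μs ρ M : ℝ}

lemma infNorm_eq_of_nonneg_of_le (hf : ∀ y, 0 ≤ f y) {x : Ω} (hx : ∀ y, f y ≤ f x) :
    infNorm f = f x := by
  have : Nonempty Ω := ⟨x⟩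
  refine le_antisymm (ciSup_le fun y => ?_) ?_
  · rw [abs_of_nonneg (hf y)]; exact hx y
  · rw [← abs_of_nonneg (hf x)]
    exact le_ciSup (f := fun y => |f y|) (Set.finite_range _).bddAbove x

lemma qNorm_one_eq_expct (hf : ∀ y, 0 ≤ f y) : qNorm μ 1 f = expct μ f := by
  simp [qNorm, expct, abs_of_nonneg (hf _)]

lemma mul_le_expct (hμ : ∀ y, 0 ≤ μ y) (hf : ∀ y, 0 ≤ f y) (x : Ω) : μ x * f x ≤ expct μ f :=
  Finset.single_le_sum (fun y _ => mul_nonneg (hμ y) (hf y)) (Finset.mem_univ x)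

lemma le_expct (hμ : ∀ y, 0 ≤ μ y) (hμsum : ∑ y, μ y = 1) {m : ℝ} (hf : ∀ y, m ≤ f y) :
    m ≤ expct μ f :=
  calc m = ∑ y, μ y * m := by rw [← Finset.sum_mul, hμsum, one_mul]
    _ ≤ expct μ f := Finset.sum_le_sum fun y _ => mul_le_mul_of_nonneg_left (hf y) (hμ y)

lemma expct_eq_sub_sum_erase [DecidableEq Ω] (hμsum : ∑ y, μ y = 1) (x : Ω) :
    expct μ f = μ x * f x + (1 - μ x) * M - ∑ y ∈ univ.erase x, μ y * (M - f y) := by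
  rw [← hμsum, ← Finset.add_sum_erase _ _ (Finset.mem_univ x), expct,
    ← Finset.add_sum_erase _ _ (Finset.mem_univ x)]
  simp only [mul_sub, Finset.sum_sub_distrib, ← Finset.sum_mul]
  ring

lemma expct_le_add (hμ : ∀ y, 0 ≤ μ y) (hμsum : ∑ y, μ y = 1) (hf : ∀ y, f y ≤ M) (x : Ω) :
    expct μ f ≤ μ x * f x + (1 - μ x) * M := by
  classical
  rw [expct_eq_sub_sum_erase hμsum x]
  have := Finset.sum_nonneg fun y (_ : y ∈ univ.erase x) =>
    mul_nonneg (hμ y) (sub_nonneg.2 (hf y))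
  linarith

lemma expct_eq_add_iff (hμ : ∀ y, 0 < μ y) (hμsum : ∑ y, μ y = 1) (hf : ∀ y, f y ≤ M)
    (x : Ω) : expct μ f = μ x * f x + (1 - μ x) * M ↔ ∀ y, y ≠ x → f y = M := by
  classical
  rw [expct_eq_sub_sum_erase hμsum x, sub_eq_self, Finset.sum_eq_zero_iff_of_nonneg
    fun y _ => mul_nonneg (hμ y).le (sub_nonneg.2 (hf y))]
  simp only [Finset.mem_erase, Finset.mem_univ, and_true, mul_eq_zero, (hμ _).ne',
    false_or, sub_eq_zero, eq_comm (a := M)]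

lemma noiseOp_nonneg (hμ : ∀ y, 0 ≤ μ y) (hμs : ∀ y, μs ≤ μ y)
    (hρ0 : (1 - μs) * (1 - ρ) ≤ 1) (hρ1 : ρ ≤ 1) (hf : ∀ y, 0 ≤ f y) (x : Ω) :
    0 ≤ noiseOp μ ρ f x := by
  have hE := mul_le_expct hμ hf x
  have hw : 0 ≤ ρ + (1 - ρ) * μ x := by nlinarith [hμs x]
  have := mul_nonneg (hf x) hw
  simp only [noiseOp]
  nlinarith

lemma noiseOp_le_noiseOp (hρ : ρ ≤ 0) {x y : Ω} (h : f x ≤ f y) :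
    noiseOp μ ρ f y ≤ noiseOp μ ρ f x := by
  simp only [noiseOp]
  nlinarith

variable {xm xM : Ω}

lemma expct_moment_bounds (hμ : ∀ y, 0 ≤ μ y) (hμsum : ∑ y, μ y = 1) (hμs : ∀ y, μs ≤ μ y)
    (hf : ∀ y, 0 ≤ f y) (hxm : ∀ y, f xm ≤ f y) (hxM : ∀ y, f y ≤ f xM) :
    f xm ≤ expct μ f ∧ expct μ f ≤ μs * f xm + (1 - μs) * f xM ∧ μs * f xM ≤ expct μ f := by
  refine ⟨le_expct hμ hμsum hxm, ?_, ?_⟩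
  · have := expct_le_add hμ hμsum hxM xm
    nlinarith [hμs xm, hxm xM]
  · exact (mul_le_mul_of_nonneg_right (hμs xM) (hf xM)).trans (mul_le_expct hμ hf xM)

lemma extremal_moments_iff (hμ : ∀ y, 0 < μ y) (hμsum : ∑ y, μ y = 1) (hμs : ∀ y, μs ≤ μ y)
    (hf : ∀ y, 0 ≤ f y) (hxm : ∀ y, f xm ≤ f y) (hxM : ∀ y, f y ≤ f xM) :
    (f xm = f xM ∨ (f xm = 0 ∧ 0 < f xM ∧ expct μ f = (1 - μs) * f xM)) ↔
      (∃ c : ℝ, ∀ x, f x = c) ∨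
        (∃ xs, μ xs = μs ∧ f xs = 0 ∧ ∀ y z, y ≠ xs → z ≠ xs → f y = f z) := by
  constructor
  · rintro (h | ⟨hm, hM, hE⟩)
    · exact Or.inl ⟨f xM, fun x => le_antisymm (hxM x) (h ▸ hxm x)⟩
    have hle := expct_le_add (fun y => (hμ y).le) hμsum hxM xm
    rw [hE, hm, mul_zero, zero_add] at hle
    have hμxm : μ xm = μs := le_antisymm (le_of_mul_le_mul_right (by linarith) hM) (hμs xm)
    have hoff := (expct_eq_add_iff hμ hμsum hxM xm).1 (by rw [hE, hm, hμxm]; ring)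
    exact Or.inr ⟨xm, hμxm, hm, fun y z hy hz => (hoff y hy).trans (hoff z hz).symm⟩
  · rintro (⟨c, hc⟩ | ⟨xs, hμxs, hxs, hconst⟩)
    · exact Or.inl (by rw [hc, hc])
    rcases (hf xM).eq_or_lt with hM | hM
    · exact Or.inl (le_antisymm (hxm xM) (hM ▸ hf xm))
    have hm : f xm = 0 := le_antisymm (hxs ▸ hxm xs) (hf xm)
    have hxMs : xM ≠ xs := fun h => hM.ne' (h ▸ hxs)
    have hE := (expct_eq_add_iff hμ hμsum hxM xs).2 fun y hy => hconst y xM hy hxMs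
    exact Or.inr ⟨hm, hM, by rw [hE, hxs, hμxs]; ring⟩

end FiniteSpace

theorem stmt3_general {Ω : Type*} [Fintype Ω]
    (μ : Ω → ℝ) (hμpos : ∀ x, 0 < μ x) (hμsum : ∑ x, μ x = 1)
    (μs : ℝ) (hμs_le : ∀ x, μs ≤ μ x) (hμs_mem : ∃ x, μ x = μs)
    (ρ lam : ℝ) (hρ0 : -(μs / (1 - μs)) ≤ ρ) (hρ1 : ρ < 0)
    (hlam : lam = -(Real.log (1 - ρ) / Real.log (1 - μs)))
    (f : Ω → ℝ) (hf : ∀ x, 0 ≤ f x) :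
    infNorm (noiseOp μ ρ f) ≤ qNorm μ 1 f ^ (1 - lam) * infNorm f ^ lam ∧
      (-(μs / (1 - μs)) < ρ →
        (infNorm (noiseOp μ ρ f) = qNorm μ 1 f ^ (1 - lam) * infNorm f ^ lam ↔
          (∃ c : ℝ, ∀ x, f x = c) ∨
            (∃ xs, μ xs = μs ∧ f xs = 0 ∧
              ∀ y z, y ≠ xs → z ≠ xs → f y = f z))) := by
  obtain ⟨x0, hx0⟩ := hμs_mem
  have : Nonempty Ω := ⟨x0⟩
  have hμ : ∀ x, 0 ≤ μ x := fun x => (hμpos x).le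
  have hμs0 : 0 < μs := hx0 ▸ hμpos x0
  -- `μs = 1` is excluded by `hρ0` only because `1 / 0 = 0`.
  have hμs1 : μs < 1 := by
    refine lt_of_le_of_ne ?_ fun h => ?_
    · exact hx0 ▸ hμsum ▸ Finset.single_le_sum (fun y _ => hμ y) (Finset.mem_univ x0)
    · rw [h, sub_self, div_zero, neg_zero] at hρ0; linarith
  have hc0 : 0 < 1 - μs := by linarith
  have hc1 : 1 - μs < 1 := by linarith
  have hcr := (neg_div_one_sub_le_iff hμs1).1 hρ0
  have hexp := rpow_one_sub_eq_mul_of_eq_neg_log_div_log hc0 hc1.ne (by linarith) hlam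
  have hlam0 := pos_of_rpow_one_sub_eq_mul hc0 hc1 hexp (by linarith)
  obtain ⟨xm, hxm⟩ := Finite.exists_min f
  obtain ⟨xM, hxM⟩ := Finite.exists_max f
  rw [infNorm_eq_of_nonneg_of_le (noiseOp_nonneg hμ hμs_le hcr (by linarith) hf)
      fun y => noiseOp_le_noiseOp hρ1.le (hxm y),
    qNorm_one_eq_expct hf, infNorm_eq_of_nonneg_of_le hf hxM]
  obtain ⟨hmE, hEM, hME⟩ := expct_moment_bounds hμ hμsum hμs_le hf hxm hxM
  refine ⟨noise_le_of_moment_bounds hμs0 hμs1 hρ1.le hexp hlam0.le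
    (le_one_of_rpow_one_sub_eq_mul hc0 hc1 hexp hcr) (hf xm) hmE hEM hME, fun hstrict => ?_⟩
  have hlam1 := lt_one_of_rpow_one_sub_eq_mul hc0 hc1 hexp
    ((neg_div_one_sub_lt_iff hμs1).1 hstrict)
  rw [noiseOp, noise_eq_iff_of_moment_bounds hμs0 hμs1 hρ1 hexp hlam0 hlam1 (hf xm) hmE hEM hME,
    extremal_moments_iff hμpos hμsum hμs_le hf hxm hxM]

theorem stmt3 {Ω : Type*} [Fintype Ω] [Nonempty Ω] (hΩ : 2 ≤ Fintype.card Ω)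
    (μ : Ω → ℝ) (hμpos : ∀ x, 0 < μ x) (hμsum : ∑ x, μ x = 1)
    (μs : ℝ) (hμs_le : ∀ x, μs ≤ μ x) (hμs_mem : ∃ x, μ x = μs)
    (ρ lam : ℝ) (hρ0 : -(μs / (1 - μs)) ≤ ρ) (hρ1 : ρ < 0)
    (hlam : lam = -(Real.log (1 - ρ) / Real.log (1 - μs)))
    (f : Ω → ℝ) (hf : ∀ x, 0 ≤ f x) :
    infNorm (noiseOp μ ρ f) ≤ qNorm μ 1 f ^ (1 - lam) * infNorm f ^ lam ∧
      (-(μs / (1 - μs)) < ρ →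
        (infNorm (noiseOp μ ρ f) = qNorm μ 1 f ^ (1 - lam) * infNorm f ^ lam ↔
          (∃ c : ℝ, ∀ x, f x = c) ∨
            (∃ xs, μ xs = μs ∧ f xs = 0 ∧
              ∀ y z, y ≠ xs → z ≠ xs → f y = f z))) :=
  stmt3_general μ hμpos hμsum μs hμs_le hμs_mem ρ lam hρ0 hρ1 hlam f hf
end

section
/- Let λ ∈ (0,1), write k := 1/μ* and z := (k^λ − 1)/(k − 1) ∈ (0,1). Then for every nonnegative function f : Ω^n → ℝ it holds that ‖T_{√z} f‖_2^2 ≤ ∏_{S⊆{1,…,n}} ( ‖E(f|S)‖_2^2 )^{λ^{|S|}·(1−λ)^{n−|S|}}; that is, the noise stability Stab_z[f] := ‖T_{√z} f‖_2^2 is at most the geometric mean over the random subset S∼λ (each coordinate included independently with probability λ) of ‖E(f|S)‖_2^2. -/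
/-!
Write `V U := ‖E(f|U)‖₂²`. Since `⟨E(f|S), E(f|T)⟩ = V (S ∩ T)` and the intersection of two
independent `√z`-biased random subsets is `z`-biased, `‖T_{√z} f‖₂² = E_{U ∼ z} V U`.
The function `V` is nondecreasing, and since `f ≥ 0` and every atom has mass at least
`μ* = 1/k`, adding one coordinate multiplies it by at most `k`. For `b ≤ a ≤ k b`, concavity of
`t ↦ t^λ` on `[1, k]`, whose chord has slope `z`, gives the two-point inequality
`(1 - z) b + z a ≤ b^(1-λ) a^λ`; an induction over the coordinates tensorises it into
`E_{U ∼ z} V U ≤ ∏_U V U ^ (λ^|U| (1-λ)^(n-|U|))`.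
-/

open Finset

/-- Expectation of `f : Ω^n → ℝ` under the product measure `μ^{⊗n}`. -/
noncomputable def pExpct {Ω : Type*} [Fintype Ω] (μ : Ω → ℝ) {n : ℕ}
    (f : (Fin n → Ω) → ℝ) : ℝ :=
  ∑ x : Fin n → Ω, (∏ i, μ (x i)) * f x

/-- Conditional expectation on the coordinates in `S`:
`E(f|S)(x) = E_{y∼μ^{⊗n}} f(z)` where `z_i = x_i` for `i ∈ S` and `z_i = y_i` otherwise. -/
noncomputable def condExp {Ω : Type*} [Fintype Ω] (μ : Ω → ℝ) {n : ℕ}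
    (S : Finset (Fin n)) (f : (Fin n → Ω) → ℝ) : (Fin n → Ω) → ℝ :=
  fun x => pExpct μ (fun y => f (S.piecewise x y))

/-- The noise operator on all `n` coordinates:
`T_ρ f = Σ_S ρ^{|S|} (1-ρ)^{n-|S|} E(f|S)`. -/
noncomputable def noiseOpN {Ω : Type*} [Fintype Ω] (μ : Ω → ℝ) {n : ℕ}
    (ρ : ℝ) (f : (Fin n → Ω) → ℝ) : (Fin n → Ω) → ℝ :=
  fun x => ∑ S : Finset (Fin n), ρ ^ S.card * (1 - ρ) ^ (n - S.card) * condExp μ S f x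

/-- The `q`-norm with respect to the product measure. -/
noncomputable def pqNorm {Ω : Type*} [Fintype Ω] (μ : Ω → ℝ) {n : ℕ}
    (q : ℝ) (f : (Fin n → Ω) → ℝ) : ℝ :=
  (∑ x : Fin n → Ω, (∏ i, μ (x i)) * |f x| ^ q) ^ (1 / q)

section BinomWeight

variable {ι : Type*}

/-- The probability that the `p`-biased random subset of `A` equals `S`, for `S ⊆ A`. -/
def binomWeight (p : ℝ) (A S : Finset ι) : ℝ := p ^ S.card * (1 - p) ^ (A.card - S.card)

lemma binomWeight_nonneg {p : ℝ} (hp0 : 0 ≤ p) (hp1 : p ≤ 1) (A S : Finset ι) :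
    0 ≤ binomWeight p A S :=
  mul_nonneg (pow_nonneg hp0 _) (pow_nonneg (sub_nonneg.2 hp1) _)

lemma sum_binomWeight (p : ℝ) (A : Finset ι) : ∑ S ∈ A.powerset, binomWeight p A S = 1 := by
  simp [binomWeight, sum_pow_mul_eq_add_pow]

variable [DecidableEq ι] {p : ℝ} {a : ι} {A S : Finset ι}

lemma binomWeight_insert (ha : a ∉ A) (hS : S ⊆ A) :
    binomWeight p (insert a A) S = (1 - p) * binomWeight p A S := by
  rw [binomWeight, binomWeight, card_insert_of_notMem ha, Nat.sub_add_comm (card_le_card hS),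
    pow_succ]
  ring

lemma binomWeight_insert_insert (ha : a ∉ A) (hS : S ⊆ A) :
    binomWeight p (insert a A) (insert a S) = p * binomWeight p A S := by
  rw [binomWeight, binomWeight, card_insert_of_notMem ha,
    card_insert_of_notMem fun h => ha (hS h), Nat.add_sub_add_right, pow_succ]
  ring

lemma sum_powerset_insert_binomWeight_mul (ha : a ∉ A) (g : Finset ι → ℝ) :
    ∑ S ∈ (insert a A).powerset, binomWeight p (insert a A) S * g S =
      (1 - p) * ∑ S ∈ A.powerset, binomWeight p A S * g S +
        p * ∑ S ∈ A.powerset, binomWeight p A S * g (insert a S) := by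
  rw [sum_powerset_insert ha, mul_sum, mul_sum]
  congr 1 <;> refine sum_congr rfl fun S hS => ?_
  · rw [binomWeight_insert ha (mem_powerset.1 hS), mul_assoc]
  · rw [binomWeight_insert_insert ha (mem_powerset.1 hS), mul_assoc]

lemma prod_powerset_insert_rpow_binomWeight (ha : a ∉ A) {g : Finset ι → ℝ}
    (hg : ∀ S, 0 ≤ g S) :
    ∏ S ∈ (insert a A).powerset, g S ^ binomWeight p (insert a A) S =
      (∏ S ∈ A.powerset, g S ^ binomWeight p A S) ^ (1 - p) *
        (∏ S ∈ A.powerset, g (insert a S) ^ binomWeight p A S) ^ p := by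
  rw [prod_powerset_insert ha, ← Real.finsetProd_rpow _ _ fun S _ => Real.rpow_nonneg (hg S) _,
    ← Real.finsetProd_rpow _ _ fun S _ => Real.rpow_nonneg (hg _) _]
  congr 1 <;> refine prod_congr rfl fun S hS => ?_
  · rw [binomWeight_insert ha (mem_powerset.1 hS), ← Real.rpow_mul (hg S), mul_comm]
  · rw [binomWeight_insert_insert ha (mem_powerset.1 hS), ← Real.rpow_mul (hg _), mul_comm]

/-- The intersection of two independent `r`-biased random subsets is `r ^ 2`-biased. -/
lemma sum_binomWeight_mul_sum_binomWeight_mul_inter (r : ℝ) (A : Finset ι) (V : Finset ι → ℝ) :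
    ∑ S ∈ A.powerset, binomWeight r A S * ∑ T ∈ A.powerset, binomWeight r A T * V (S ∩ T) =
      ∑ U ∈ A.powerset, binomWeight (r ^ 2) A U * V U := by
  induction A using Finset.induction_on generalizing V with
  | empty => simp [binomWeight]
  | @insert a A ha ih =>
    set P : Finset ι → ℝ := fun S => ∑ T ∈ A.powerset, binomWeight r A T * V (S ∩ T)
    set Q : Finset ι → ℝ := fun S => ∑ T ∈ A.powerset, binomWeight r A T * V (insert a (S ∩ T))
    have hsums : ∀ S ⊆ A,
        ∑ T ∈ A.powerset, binomWeight r A T * V (S ∩ insert a T) = P S ∧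
        ∑ T ∈ A.powerset, binomWeight r A T * V (insert a S ∩ T) = P S ∧
        ∑ T ∈ A.powerset, binomWeight r A T * V (insert a S ∩ insert a T) = Q S := by
      intro S hS
      refine ⟨sum_congr rfl fun T _ => ?_, sum_congr rfl fun T hT => ?_,
        sum_congr rfl fun T _ => ?_⟩
      · rw [inter_insert_of_notMem fun h => ha (hS h)]
      · rw [insert_inter_of_notMem fun h => ha (mem_powerset.1 hT h)]
      · rw [← insert_inter_distrib]
    calc
      _ = (1 - r) * ∑ S ∈ A.powerset, binomWeight r A S * ((1 - r) * P S + r * P S) +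
          r * ∑ S ∈ A.powerset, binomWeight r A S * ((1 - r) * P S + r * Q S) := by
        simp only [sum_powerset_insert_binomWeight_mul ha]
        congr 2 <;> refine sum_congr rfl fun S hS => ?_ <;>
          obtain ⟨h₁, h₂, h₃⟩ := hsums S (mem_powerset.1 hS)
        · rw [h₁]
        · rw [h₂, h₃]
      _ = (1 - r ^ 2) * ∑ S ∈ A.powerset, binomWeight r A S * P S +
          r ^ 2 * ∑ S ∈ A.powerset, binomWeight r A S * Q S := by
        simp only [mul_sum, ← sum_add_distrib]
        exact sum_congr rfl fun _ _ => by ring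
      _ = _ := by
        rw [sum_powerset_insert_binomWeight_mul ha, ← ih, ← ih]

lemma one_add_mul_sub_one_le_rpow {k lam t : ℝ} (hk : 1 < k) (hlam0 : 0 ≤ lam) (hlam1 : lam ≤ 1)
    (ht1 : 1 ≤ t) (htk : t ≤ k) : 1 + (k ^ lam - 1) / (k - 1) * (t - 1) ≤ t ^ lam := by
  have hk1 : k - 1 ≠ 0 := by linarith
  set θ := (k - t) / (k - 1)
  have hθ0 : 0 ≤ θ := div_nonneg (by linarith) (by linarith)
  have hθ1 : 0 ≤ 1 - θ := by
    rw [sub_nonneg, div_le_one (by linarith)]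
    linarith
  have hconc := (Real.concaveOn_rpow hlam0 hlam1).2 (Set.mem_Ici.2 zero_le_one)
    (Set.mem_Ici.2 (by linarith : (0 : ℝ) ≤ k)) hθ0 hθ1 (by ring)
  have hmix : θ * 1 + (1 - θ) * k = t := by
    simp only [θ]
    field_simp
    ring
  simp only [smul_eq_mul, hmix, Real.one_rpow] at hconc
  refine le_of_eq_of_le ?_ hconc
  simp only [θ]
  field_simp
  ring

lemma mul_add_mul_le_rpow_mul_rpow {k lam a b : ℝ} (hk : 1 < k) (hlam0 : 0 < lam)
    (hlam1 : lam ≤ 1) (hb : 0 ≤ b) (hba : b ≤ a) (hak : a ≤ k * b) :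
    (1 - (k ^ lam - 1) / (k - 1)) * b + (k ^ lam - 1) / (k - 1) * a ≤
      b ^ (1 - lam) * a ^ lam := by
  rcases hb.eq_or_lt with rfl | hb
  · obtain rfl : a = 0 := by linarith
    simp [Real.zero_rpow hlam0.ne']
  have hchord := one_add_mul_sub_one_le_rpow hk hlam0.le hlam1 ((one_le_div hb).2 hba)
    ((div_le_iff₀ hb).2 hak)
  calc _ = (1 + (k ^ lam - 1) / (k - 1) * (a / b - 1)) * b := by field_simp; ring
    _ ≤ (a / b) ^ lam * b := by gcongr
    _ = b ^ (1 - lam) * a ^ lam := by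
      rw [Real.div_rpow (by linarith) hb.le, Real.rpow_sub hb, Real.rpow_one]
      field_simp

lemma rpow_sub_one_div_sub_one_mem_Ioo {k lam : ℝ} (hk : 1 < k) (hlam0 : 0 < lam)
    (hlam1 : lam < 1) : (k ^ lam - 1) / (k - 1) ∈ Set.Ioo 0 1 := by
  have h1 : 1 < k ^ lam := Real.one_lt_rpow hk hlam0
  have h2 : k ^ lam < k := by
    simpa using Real.rpow_lt_rpow_of_exponent_lt hk hlam1
  exact ⟨div_pos (by linarith) (by linarith), (div_lt_one (by linarith)).2 (by linarith)⟩

lemma prod_rpow_le_mul_prod_rpow {α : Type*} {s : Finset α} {w g h : α → ℝ} {c : ℝ}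
    (hc : 0 ≤ c) (hw : ∀ i ∈ s, 0 ≤ w i) (hw1 : ∑ i ∈ s, w i = 1) (hg : ∀ i ∈ s, 0 ≤ g i)
    (hh : ∀ i ∈ s, 0 ≤ h i) (hgh : ∀ i ∈ s, g i ≤ c * h i) :
    ∏ i ∈ s, g i ^ w i ≤ c * ∏ i ∈ s, h i ^ w i :=
  calc ∏ i ∈ s, g i ^ w i ≤ ∏ i ∈ s, (c * h i) ^ w i :=
        prod_le_prod (fun i hi => Real.rpow_nonneg (hg i hi) _)
          fun i hi => Real.rpow_le_rpow (hg i hi) (hgh i hi) (hw i hi)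
    _ = (∏ i ∈ s, c ^ w i) * ∏ i ∈ s, h i ^ w i := by
        rw [← prod_mul_distrib]
        exact prod_congr rfl fun i hi => Real.mul_rpow hc (hh i hi)
    _ = c * ∏ i ∈ s, h i ^ w i := by rw [← Real.rpow_sum_of_nonneg hc hw, hw1, Real.rpow_one]

lemma sum_binomWeight_mul_le_prod_rpow {k lam : ℝ} (hk : 1 < k) (hlam0 : 0 < lam)
    (hlam1 : lam < 1) (A : Finset ι) {V : Finset ι → ℝ} (hV : ∀ U, 0 ≤ V U)
    (hmono : ∀ U i, V U ≤ V (insert i U)) (hratio : ∀ U, ∀ i ∉ U, V (insert i U) ≤ k * V U) :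
    ∑ U ∈ A.powerset, binomWeight ((k ^ lam - 1) / (k - 1)) A U * V U ≤
      ∏ U ∈ A.powerset, V U ^ binomWeight lam A U := by
  obtain ⟨hz0, hz1⟩ := rpow_sub_one_div_sub_one_mem_Ioo hk hlam0 hlam1
  induction A using Finset.induction_on generalizing V with
  | empty => simp [binomWeight]
  | @insert a A ha ih =>
    have hw : ∀ U ∈ A.powerset, 0 ≤ binomWeight lam A U :=
      fun U _ => binomWeight_nonneg hlam0.le hlam1.le A U
    have hB := ih hV hmono hratio
    have hC := ih (V := fun U => V (insert a U)) (fun U => hV _)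
      (fun U i => by simpa only [insert_comm a i] using hmono (insert a U) i)
      fun U i hi => by
        rcases eq_or_ne i a with rfl | hia
        · simpa using le_mul_of_one_le_left (hV _) hk.le
        · simpa only [insert_comm a i] using hratio (insert a U) i (by simp [hi, hia])
    have hBC := prod_rpow_le_mul_prod_rpow (g := V) (h := fun U => V (insert a U)) zero_le_one
      hw (sum_binomWeight lam A) (fun U _ => hV U) (fun U _ => hV _)
      fun U _ => (one_mul (V _)).symm ▸ hmono U a
    have hCB := prod_rpow_le_mul_prod_rpow (zero_le_one.trans hk.le) hw (sum_binomWeight lam A)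
      (fun U _ => hV _) (fun U _ => hV U)
      fun U hU => hratio U a fun h => ha (mem_powerset.1 hU h)
    rw [sum_powerset_insert_binomWeight_mul ha, prod_powerset_insert_rpow_binomWeight ha hV]
    calc
      _ ≤ (1 - (k ^ lam - 1) / (k - 1)) * ∏ U ∈ A.powerset, V U ^ binomWeight lam A U +
          (k ^ lam - 1) / (k - 1) * ∏ U ∈ A.powerset, V (insert a U) ^ binomWeight lam A U :=
        add_le_add (mul_le_mul_of_nonneg_left hB (sub_nonneg.2 hz1.le))
          (mul_le_mul_of_nonneg_left hC hz0.le)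
      _ ≤ _ := mul_add_mul_le_rpow_mul_rpow hk hlam0 hlam1.le
        (prod_nonneg fun U _ => Real.rpow_nonneg (hV U) _) (by simpa using hBC) hCB

end BinomWeight

section ProductSpace

variable {Ω : Type*} [Fintype Ω] {μ : Ω → ℝ} {n : ℕ}

lemma pExpct_mono (hμ : ∀ a, 0 ≤ μ a) {g h : (Fin n → Ω) → ℝ} (hgh : ∀ x, g x ≤ h x) :
    pExpct μ g ≤ pExpct μ h :=
  sum_le_sum fun x _ => mul_le_mul_of_nonneg_left (hgh x) (prod_nonneg fun _ _ => hμ _)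

lemma pExpct_nonneg (hμ : ∀ a, 0 ≤ μ a) {g : (Fin n → Ω) → ℝ} (hg : ∀ x, 0 ≤ g x) :
    0 ≤ pExpct μ g := by
  simpa [pExpct] using pExpct_mono hμ hg

lemma pExpct_const_mul (c : ℝ) (g : (Fin n → Ω) → ℝ) :
    pExpct μ (fun x => c * g x) = c * pExpct μ g := by
  simp only [pExpct, mul_sum, mul_left_comm]

lemma pExpct_mul_const (c : ℝ) (g : (Fin n → Ω) → ℝ) :
    pExpct μ (fun x => g x * c) = pExpct μ g * c := by
  simp only [pExpct, sum_mul, mul_assoc]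

lemma pExpct_const (hμ1 : ∑ a, μ a = 1) (c : ℝ) : pExpct μ (fun _ : Fin n → Ω => c) = c := by
  rw [pExpct, ← sum_mul, ← Fintype.prod_sum fun (_ : Fin n) a => μ a]
  simp [hμ1]

lemma pExpct_sub_sq (a b : (Fin n → Ω) → ℝ) :
    pExpct μ (fun x => (a x - b x) ^ 2) =
      pExpct μ (fun x => a x ^ 2) - 2 * pExpct μ (fun x => a x * b x) +
        pExpct μ (fun x => b x ^ 2) := by
  simp only [pExpct, mul_sum, ← sum_sub_distrib, ← sum_add_distrib]
  exact sum_congr rfl fun _ _ => by ring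

lemma pExpct_sum_sq {κ : Type*} (s : Finset κ) (c : κ → ℝ) (g : κ → (Fin n → Ω) → ℝ) :
    pExpct μ (fun x => (∑ S ∈ s, c S * g S x) ^ 2) =
      ∑ S ∈ s, c S * ∑ T ∈ s, c T * pExpct μ (fun x => g S x * g T x) := by
  simp only [pExpct, sq, sum_mul, mul_sum]
  rw [sum_comm]
  refine sum_congr rfl fun S _ => ?_
  rw [sum_comm]
  exact sum_congr rfl fun T _ => sum_congr rfl fun x _ => by ring

lemma pExpct_pExpct_piecewise_swap (S : Finset (Fin n))
    (F : (Fin n → Ω) → (Fin n → Ω) → ℝ) :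
    pExpct μ (fun x => pExpct μ (fun y => F (S.piecewise x y) (S.piecewise y x))) =
      pExpct μ (fun x => pExpct μ (fun y => F x y)) := by
  have hswap : Function.Involutive fun p : (Fin n → Ω) × (Fin n → Ω) =>
      (S.piecewise p.1 p.2, S.piecewise p.2 p.1) := fun p => by
    ext <;> simp [piecewise_same]
  simp only [pExpct, mul_sum, ← Fintype.sum_prod_type']
  refine Fintype.sum_equiv (hswap.toPerm _) _ _ fun p => ?_
  rw [← mul_assoc, ← mul_assoc, ← prod_mul_distrib, ← prod_mul_distrib]
  congr 1
  refine prod_congr rfl fun i _ => ?_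
  by_cases hi : i ∈ S <;> simp [hi, mul_comm]

lemma pExpct_condExp (hμ1 : ∑ a, μ a = 1) (S : Finset (Fin n)) (g : (Fin n → Ω) → ℝ) :
    pExpct μ (condExp μ S g) = pExpct μ g := by
  unfold condExp
  simpa [pExpct_const hμ1] using pExpct_pExpct_piecewise_swap (μ := μ) S fun a _ => g a

lemma pExpct_condExp_mul (S : Finset (Fin n)) (φ ψ : (Fin n → Ω) → ℝ) :
    pExpct μ (fun x => condExp μ S φ x * ψ x) = pExpct μ (fun x => φ x * condExp μ S ψ x) := by
  have := pExpct_pExpct_piecewise_swap (μ := μ) S fun a b => φ a * ψ (S.piecewise a b)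
  simp only [piecewise_idem_left, piecewise_idem_right, piecewise_same] at this
  simpa only [condExp, ← pExpct_mul_const, ← pExpct_const_mul] using this

lemma condExp_condExp (hμ1 : ∑ a, μ a = 1) (S T : Finset (Fin n)) (f : (Fin n → Ω) → ℝ) :
    condExp μ T (condExp μ S f) = condExp μ (S ∩ T) f := by
  funext x
  have hpw : ∀ y y' : Fin n → Ω,
      S.piecewise (T.piecewise x y) y' = (S ∩ T).piecewise x (S.piecewise y y') := by
    intro y y'
    ext j
    by_cases hS : j ∈ S <;> by_cases hT : j ∈ T <;> simp [hS, hT]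
  have := pExpct_condExp hμ1 S fun a => f ((S ∩ T).piecewise x a)
  unfold condExp at this ⊢
  simpa only [hpw] using this

lemma pExpct_condExp_mul_condExp (hμ1 : ∑ a, μ a = 1) (S T : Finset (Fin n))
    (f : (Fin n → Ω) → ℝ) :
    pExpct μ (fun x => condExp μ S f x * condExp μ T f x) =
      pExpct μ (fun x => condExp μ (S ∩ T) f x ^ 2) := by
  calc _ = pExpct μ (fun x => f x * condExp μ (S ∩ T) f x) := by
        rw [pExpct_condExp_mul, condExp_condExp hμ1, inter_comm]
    _ = pExpct μ (fun x => f x * condExp μ (S ∩ T) (condExp μ (S ∩ T) f) x) := by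
        rw [condExp_condExp hμ1, inter_self]
    _ = _ := by
        simp only [← pExpct_condExp_mul, sq]

lemma pExpct_condExp_sq_mono (hμ : ∀ a, 0 ≤ μ a) (hμ1 : ∑ a, μ a = 1) {S T : Finset (Fin n)}
    (hTS : T ⊆ S) (f : (Fin n → Ω) → ℝ) :
    pExpct μ (fun x => condExp μ T f x ^ 2) ≤ pExpct μ (fun x => condExp μ S f x ^ 2) := by
  have h := pExpct_nonneg hμ fun x => sq_nonneg (condExp μ S f x - condExp μ T f x)
  rw [pExpct_sub_sq, pExpct_condExp_mul_condExp hμ1, inter_eq_right.2 hTS] at h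
  linarith

lemma sum_prod_filter_apply_eq (hμ1 : ∑ a, μ a = 1) [DecidableEq Ω] (i : Fin n) (c : Ω) :
    ∑ y ∈ univ.filter (fun y : Fin n → Ω => y i = c), ∏ j, μ (y j) = μ c := by
  have hfib : univ.filter (fun y : Fin n → Ω => y i = c) =
      Fintype.piFinset (fun j => if j = i then {c} else univ) := by
    ext y
    simp only [mem_filter, mem_univ, true_and, Fintype.mem_piFinset]
    refine ⟨fun hy j => ?_, fun hy => by simpa using hy i⟩
    rcases eq_or_ne j i with rfl | hj <;> simp_all
  rw [hfib, ← prod_univ_sum, Fintype.prod_eq_single i fun j hj => by simp [hj, hμ1]]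
  simp

lemma condExp_nonneg (hμ : ∀ a, 0 ≤ μ a) {f : (Fin n → Ω) → ℝ} (hf : ∀ x, 0 ≤ f x)
    (S : Finset (Fin n)) (x : Fin n → Ω) : 0 ≤ condExp μ S f x :=
  pExpct_nonneg hμ fun _ => hf _

lemma condExp_congr (S : Finset (Fin n)) (f : (Fin n → Ω) → ℝ) {x x' : Fin n → Ω}
    (h : ∀ j ∈ S, x j = x' j) : condExp μ S f x = condExp μ S f x' := by
  simp only [condExp, S.piecewise_congr h fun _ _ => rfl]

/-- On the fibre `{y | y i = x i}`, of mass `μ (x i) ≥ m`, the variable `U.piecewise x y` agrees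
with `x` on `insert i U`. -/
lemma mul_condExp_insert_le (hμ : ∀ a, 0 ≤ μ a) (hμ1 : ∑ a, μ a = 1) {m : ℝ}
    (hm : ∀ a, m ≤ μ a) {f : (Fin n → Ω) → ℝ} (hf : ∀ x, 0 ≤ f x) {U : Finset (Fin n)}
    {i : Fin n} (hi : i ∉ U) (x : Fin n → Ω) :
    m * condExp μ (insert i U) f x ≤ condExp μ U f x := by
  classical
  set h := condExp μ (insert i U) f
  have hfib : ∀ y ∈ univ.filter (fun y : Fin n → Ω => y i = x i), h (U.piecewise x y) = h x :=
    fun y hy => condExp_congr _ _ fun j hj => by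
      rcases mem_insert.1 hj with rfl | hj
      · simp [hi, (mem_filter.1 hy).2]
      · simp [hj]
  calc m * h x ≤ μ (x i) * h x := mul_le_mul_of_nonneg_right (hm _) (condExp_nonneg hμ hf _ _)
    _ = ∑ y ∈ univ.filter (fun y : Fin n → Ω => y i = x i),
          (∏ j, μ (y j)) * h (U.piecewise x y) := by
        rw [← sum_prod_filter_apply_eq hμ1, sum_mul]
        exact sum_congr rfl fun y hy => by rw [hfib y hy]
    _ ≤ condExp μ U h x :=
        sum_le_sum_of_subset_of_nonneg (filter_subset _ _) fun y _ _ =>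
          mul_nonneg (prod_nonneg fun _ _ => hμ _) (condExp_nonneg hμ hf _ _)
    _ = condExp μ U f x := by rw [condExp_condExp hμ1, inter_eq_right.2 (subset_insert i U)]

lemma pExpct_condExp_insert_sq_le (hμ : ∀ a, 0 ≤ μ a) (hμ1 : ∑ a, μ a = 1) {m : ℝ}
    (hm0 : 0 < m) (hm : ∀ a, m ≤ μ a) {f : (Fin n → Ω) → ℝ} (hf : ∀ x, 0 ≤ f x)
    {U : Finset (Fin n)} {i : Fin n} (hi : i ∉ U) :
    pExpct μ (fun x => condExp μ (insert i U) f x ^ 2) ≤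
      m⁻¹ * pExpct μ (fun x => condExp μ U f x ^ 2) :=
  calc _ ≤ pExpct μ (fun x => m⁻¹ * (condExp μ (insert i U) f x * condExp μ U f x)) :=
        pExpct_mono hμ fun x => by
          rw [sq, mul_left_comm]
          exact mul_le_mul_of_nonneg_left
            ((le_inv_mul_iff₀ hm0).2 (mul_condExp_insert_le hμ hμ1 hm hf hi x))
            (condExp_nonneg hμ hf _ _)
    _ = _ := by
        rw [pExpct_const_mul, pExpct_condExp_mul_condExp hμ1, inter_eq_right.2 (subset_insert i U)]

lemma sq_pqNorm_two (hμ : ∀ a, 0 ≤ μ a) (g : (Fin n → Ω) → ℝ) :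
    pqNorm μ 2 g ^ 2 = pExpct μ fun x => g x ^ 2 := by
  have hnn : 0 ≤ ∑ x : Fin n → Ω, (∏ i, μ (x i)) * g x ^ 2 :=
    pExpct_nonneg hμ fun x => sq_nonneg (g x)
  simp only [pqNorm, Real.rpow_two, sq_abs]
  rw [← Real.rpow_natCast, ← Real.rpow_mul hnn]
  norm_num [pExpct]

end ProductSpace

lemma lt_one_of_forall_le {Ω : Type*} [Fintype Ω] (hΩ : 2 ≤ Fintype.card Ω) {μ : Ω → ℝ}
    (hμ1 : ∑ a, μ a = 1) {m : ℝ} (hm : ∀ a, m ≤ μ a) : m < 1 := by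
  have hsum := card_nsmul_le_sum univ μ m fun a _ => hm a
  rw [hμ1, card_univ, nsmul_eq_mul] at hsum
  have hcard : (2 : ℝ) ≤ Fintype.card Ω := by exact_mod_cast hΩ
  nlinarith

theorem stmt6 {Ω : Type*} [Fintype Ω] (hΩ : 2 ≤ Fintype.card Ω)
    (μ : Ω → ℝ) (hμpos : ∀ x, 0 < μ x) (hμsum : ∑ x, μ x = 1)
    (μs : ℝ) (hμs_le : ∀ x, μs ≤ μ x) (hμs_mem : ∃ x, μ x = μs)
    (lam k z : ℝ) (hlam0 : 0 < lam) (hlam1 : lam < 1)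
    (hk : k = 1 / μs) (hz : z = (k ^ lam - 1) / (k - 1))
    (n : ℕ) (f : (Fin n → Ω) → ℝ) (hf : ∀ x, 0 ≤ f x) :
    (0 < z ∧ z < 1) ∧
      pqNorm μ 2 (noiseOpN μ (Real.sqrt z) f) ^ 2 ≤
        ∏ S : Finset (Fin n),
          (pqNorm μ 2 (condExp μ S f) ^ 2) ^ (lam ^ S.card * (1 - lam) ^ (n - S.card)) := by
  obtain ⟨x₀, hx₀⟩ := hμs_mem
  have hμ : ∀ a, 0 ≤ μ a := fun a => (hμpos a).le
  have hμs0 : 0 < μs := hx₀ ▸ hμpos x₀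
  have hk1 : 1 < k := hk ▸ (one_lt_div hμs0).2 (lt_one_of_forall_le hΩ hμsum hμs_le)
  have hz01 : z ∈ Set.Ioo 0 1 := hz ▸ rpow_sub_one_div_sub_one_mem_Ioo hk1 hlam0 hlam1
  refine ⟨hz01, ?_⟩
  have hweight : ∀ (ρ : ℝ) (S : Finset (Fin n)),
      ρ ^ S.card * (1 - ρ) ^ (n - S.card) = binomWeight ρ univ S := by simp [binomWeight]
  set V : Finset (Fin n) → ℝ := fun U => pExpct μ fun x => condExp μ U f x ^ 2
  calc pqNorm μ 2 (noiseOpN μ (Real.sqrt z) f) ^ 2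
      = ∑ S ∈ univ.powerset, binomWeight (Real.sqrt z) univ S *
          ∑ T ∈ univ.powerset, binomWeight (Real.sqrt z) univ T * V (S ∩ T) := by
        simp only [noiseOpN, sq_pqNorm_two hμ, hweight, pExpct_sum_sq,
          pExpct_condExp_mul_condExp hμsum, ← powerset_univ, V]
    _ = ∑ U ∈ univ.powerset, binomWeight z univ U * V U := by
        rw [sum_binomWeight_mul_sum_binomWeight_mul_inter, Real.sq_sqrt hz01.1.le]
    _ ≤ ∏ U ∈ univ.powerset, V U ^ binomWeight lam univ U := hz ▸
        sum_binomWeight_mul_le_prod_rpow hk1 hlam0 hlam1 univ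
          (fun U => pExpct_nonneg hμ fun x => sq_nonneg (condExp μ U f x))
          (fun U i => pExpct_condExp_sq_mono hμ hμsum (subset_insert i U) f)
          (fun U i hi => hk ▸ (one_div μs).symm ▸
            pExpct_condExp_insert_sq_le hμ hμsum hμs0 hμs_le hf hi)
    _ = _ := by simp only [V, powerset_univ, hweight, sq_pqNorm_two hμ]
end

section
/- Let q ≥ 2, let k ≥ 3 be an integer, α > 0, and 0 < ρ < 1. Let X be a finitely supported real random variable with E[X] = 0 and −1 ≤ X ≤ α whose support has size at least 3 and at most k. Then there exists a finitely supported real random variable X' with E[X'] = 0, −1 ≤ X' ≤ α, X' not almost surely 0, and support of size at most k, such that R_{q,ρ}(X) < R_{q,ρ}(X'). -/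
/-!
Choose three support points `x < y < z` and move mass along
`w = (z - y) δ_x + (x - z) δ_y + (y - x) δ_z`, which preserves total mass and mean; for small
`|ε|`, `ν + ε w` is again admissible with the same support. Both `N_{q,ρ}` and `N_{q,1}` are
affine in `ε`, say `a + ε c` and `b + ε d`, where `1 < a < b` (Bernoulli and convexity) and
`d > 0` (strict convexity of `(1 + t) ^ q`). With `ℓ = log a / log b ∈ (0, 1)`, strict concavity
of `log` gives `ℓ log (1 + ε d / b) < log (1 + ℓ ε d / b)`, and this is at most
`log (1 + ε c / a)` as soon as `ε` has the sign of `c / a - ℓ d / b`. For such `ε` the ratio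
`R_{q,ρ}` strictly increases.
-/

open Finset

/-- `N_{q,ρ}(X) = E[(1+ρX)^q]` for a finitely supported random variable given by its
probability mass function `ν : ℝ →₀ ℝ` on values. -/
noncomputable def Nfun (ν : ℝ →₀ ℝ) (q ρ : ℝ) : ℝ :=
  ∑ t ∈ ν.support, ν t * (1 + ρ * t) ^ q

/-- `R_{q,ρ}(X) = ln N_{q,ρ}(X) / ln N_{q,1}(X)`. -/
noncomputable def Rfun (ν : ℝ →₀ ℝ) (q ρ : ℝ) : ℝ :=
  Real.log (Nfun ν q ρ) / Real.log (Nfun ν q 1)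

open Filter Topology Real

lemma Finset.exists_lt_lt_of_three_le_card {α : Type*} [LinearOrder α] {s : Finset α}
    (hs : 3 ≤ s.card) : ∃ x ∈ s, ∃ y ∈ s, ∃ z ∈ s, x < y ∧ y < z := by
  obtain ⟨t, hts, ht⟩ := Finset.exists_subset_card_eq hs
  let f := t.orderEmbOfFin ht
  exact ⟨f 0, hts (t.orderEmbOfFin_mem ht 0), f 1, hts (t.orderEmbOfFin_mem ht 1),
    f 2, hts (t.orderEmbOfFin_mem ht 2), f.strictMono (by decide), f.strictMono (by decide)⟩

noncomputable def threePointDiff (f : ℝ → ℝ) (x y z : ℝ) : ℝ :=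
  (z - y) * f x + (x - z) * f y + (y - x) * f z

lemma StrictConvexOn.threePointDiff_pos {s : Set ℝ} {f : ℝ → ℝ} (hf : StrictConvexOn ℝ s f)
    {x y z : ℝ} (hx : x ∈ s) (hz : z ∈ s) (hxy : x < y) (hyz : y < z) :
    0 < threePointDiff f x y z := by
  have h := hf.slope_strict_mono_adjacent hx hz hxy hyz
  rw [div_lt_div_iff₀ (sub_pos.2 hxy) (sub_pos.2 hyz)] at h
  rw [threePointDiff]
  linarith

lemma threePointDiff_one_add_rpow_pos {q x y z : ℝ} (hq : 1 < q) (hx : -1 ≤ x) (hxy : x < y)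
    (hyz : y < z) :
    0 < threePointDiff (fun t => (1 + t) ^ q) x y z := by
  have h := (strictConvexOn_rpow hq).threePointDiff_pos (x := 1 + x) (y := 1 + y) (z := 1 + z)
    (by simp only [Set.mem_Ici]; linarith) (by simp only [Set.mem_Ici]; linarith)
    (by linarith) (by linarith)
  simpa only [threePointDiff, add_sub_add_left_eq_sub] using h

lemma eventually_lt_add_mul {p r : ℝ} (c : ℝ) (h : r < p) :
    ∀ᶠ ε in 𝓝 (0 : ℝ), r < p + ε * c :=
  ((continuous_const.add (continuous_id.mul continuous_const)).tendsto' _ _ (by simp)).eventually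
    (lt_mem_nhds h)

lemma log_div_log_lt_log_div_log_add {a b c d ε : ℝ} (ha : 1 < a) (hab : a < b)
    (hεd : ε * d ≠ 0) (hε : 0 ≤ ε * (c / a - log a / log b * (d / b)))
    (ha' : 0 < a + ε * c) (hb' : 1 < b + ε * d) :
    log a / log b < log (a + ε * c) / log (b + ε * d) := by
  have hb : 0 < b := by linarith
  have hlogb : 0 < log b := log_pos (by linarith)
  set l := log a / log b with hl
  have hl0 : 0 < l := div_pos (log_pos ha) hlogb
  have hl1 : l < 1 := (div_lt_one hlogb).2 (log_lt_log (by linarith) hab)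
  have hloga : log a = l * log b := by rw [hl, div_mul_cancel₀ _ hlogb.ne']
  have hca : a + ε * c = a * (1 + ε * c / a) := by field_simp
  have hdb : b + ε * d = b * (1 + ε * d / b) := by field_simp
  have hca_pos : 0 < 1 + ε * c / a := pos_of_mul_pos_right (hca ▸ ha') (by linarith)
  have hdb_pos : 0 < 1 + ε * d / b := pos_of_mul_pos_right (hdb ▸ (by linarith)) hb.le
  have hconc : l * log (1 + ε * d / b) < log (1 + l * (ε * d / b)) := by
    have h := strictConcaveOn_log_Ioi.2 (Set.mem_Ioi.2 one_pos) hdb_pos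
      (fun h => div_ne_zero hεd hb.ne' (by linarith)) (sub_pos.2 hl1) hl0 (sub_add_cancel 1 l)
    simp only [smul_eq_mul, log_one, mul_zero, zero_add] at h
    rwa [show (1 - l) * 1 + l * (1 + ε * d / b) = 1 + l * (ε * d / b) by ring] at h
  have hmono : log (1 + l * (ε * d / b)) ≤ log (1 + ε * c / a) := by
    refine log_le_log (by nlinarith) ?_
    rw [mul_div_assoc, mul_div_assoc]
    nlinarith
  rw [div_lt_div_iff₀ hlogb (log_pos hb'), hca, hdb, log_mul (by positivity) hca_pos.ne',
    log_mul hb.ne' hdb_pos.ne', hloga]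
  nlinarith

lemma frequently_log_div_log_lt_log_div_log_add {a b d : ℝ} (c : ℝ) (ha : 1 < a) (hab : a < b)
    (hd : d ≠ 0) :
    ∃ᶠ ε in 𝓝 0, log a / log b < log (a + ε * c) / log (b + ε * d) := by
  have hev : ∀ᶠ ε in 𝓝 (0 : ℝ), 0 < a + ε * c ∧ 1 < b + ε * d :=
    (eventually_lt_add_mul c (by linarith)).and (eventually_lt_add_mul d (ha.trans hab))
  have key : ∀ ε, ε ≠ 0 → 0 ≤ ε * (c / a - log a / log b * (d / b)) →
      0 < a + ε * c ∧ 1 < b + ε * d → log a / log b < log (a + ε * c) / log (b + ε * d) :=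
    fun ε hε hK h => log_div_log_lt_log_div_log_add ha hab (mul_ne_zero hε hd) hK h.1 h.2
  rcases le_or_gt 0 (c / a - log a / log b * (d / b)) with hK | hK
  · refine (Eventually.frequently ?_).filter_mono (nhdsWithin_le_nhds (s := Set.Ioi 0))
    filter_upwards [self_mem_nhdsWithin, nhdsWithin_le_nhds hev] with ε hε h
    exact key ε (ne_of_gt hε) (mul_nonneg (le_of_lt hε) hK) h
  · refine (Eventually.frequently ?_).filter_mono (nhdsWithin_le_nhds (s := Set.Iio 0))
    filter_upwards [self_mem_nhdsWithin, nhdsWithin_le_nhds hev] with ε hε h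
    exact key ε (ne_of_lt hε) (mul_pos_of_neg_of_neg hε hK).le h

lemma sum_support_mul_affine (ν : ℝ →₀ ℝ) (a b : ℝ) :
    ∑ t ∈ ν.support, ν t * (a + b * t) =
      a * ∑ t ∈ ν.support, ν t + b * ∑ t ∈ ν.support, ν t * t := by
  simp only [mul_sum, ← sum_add_distrib]
  exact sum_congr rfl fun t _ => by ring

lemma one_lt_Nfun {ν : ℝ →₀ ℝ} {q r t₀ : ℝ} (hq : 1 < q) (hr0 : 0 < r) (hr1 : r ≤ 1)
    (hν : ∀ t, 0 ≤ ν t) (hsum : ∑ t ∈ ν.support, ν t = 1)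
    (hmean : ∑ t ∈ ν.support, ν t * t = 0) (hrange : ∀ t ∈ ν.support, -1 ≤ t)
    (ht₀ : t₀ ∈ ν.support) (ht₀0 : t₀ ≠ 0) :
    1 < Nfun ν q r := by
  have hrt : ∀ t ∈ ν.support, -1 ≤ r * t := fun t ht => by nlinarith [hrange t ht]
  calc (1 : ℝ) = ∑ t ∈ ν.support, ν t * (1 + q * r * t) := by
        rw [sum_support_mul_affine, hsum, hmean]; ring
    _ < Nfun ν q r := by
      refine sum_lt_sum (fun t ht => mul_le_mul_of_nonneg_left ?_ (hν t))
        ⟨t₀, ht₀, mul_lt_mul_of_pos_left ?_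
          ((hν t₀).lt_of_ne' (Finsupp.mem_support_iff.1 ht₀))⟩
      · simpa only [mul_assoc] using one_add_mul_self_le_rpow_one_add (hrt t ht) hq.le
      · simpa only [mul_assoc] using
          one_add_mul_self_lt_rpow_one_add (hrt t₀ ht₀) (mul_ne_zero hr0.ne' ht₀0) hq

lemma Nfun_lt_Nfun_one {ν : ℝ →₀ ℝ} {q ρ : ℝ} (hq : 1 ≤ q) (hρ0 : 0 ≤ ρ) (hρ1 : ρ < 1)
    (hν : ∀ t, 0 ≤ ν t) (hsum : ∑ t ∈ ν.support, ν t = 1) (hrange : ∀ t ∈ ν.support, -1 ≤ t)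
    (hN1 : 1 < Nfun ν q 1) : Nfun ν q ρ < Nfun ν q 1 := by
  have hconv : ∀ t ∈ ν.support, (1 + ρ * t) ^ q ≤ (1 - ρ) + ρ * (1 + 1 * t) ^ q := by
    intro t ht
    have h := (convexOn_rpow hq).2 (Set.mem_Ici.2 zero_le_one)
      (Set.mem_Ici.2 (by linarith [hrange t ht] : (0 : ℝ) ≤ 1 + t)) (sub_nonneg.2 hρ1.le) hρ0
      (sub_add_cancel 1 ρ)
    simp only [smul_eq_mul, Real.one_rpow, mul_one] at h
    rw [one_mul]
    rwa [show 1 - ρ + ρ * (1 + t) = 1 + ρ * t by ring] at h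
  calc Nfun ν q ρ ≤ ∑ t ∈ ν.support, ν t * ((1 - ρ) + ρ * (1 + 1 * t) ^ q) :=
        sum_le_sum fun t ht => mul_le_mul_of_nonneg_left (hconv t ht) (hν t)
    _ = (1 - ρ) + ρ * Nfun ν q 1 := by
        simp only [Nfun, mul_add, sum_add_distrib, ← sum_mul, hsum, mul_sum]
        ring_nf
    _ < Nfun ν q 1 := by nlinarith

/-- A signed measure on `{x, y, z}` annihilating affine functions. -/
noncomputable def threePointShift (x y z : ℝ) : ℝ →₀ ℝ :=
  Finsupp.single x (z - y) + Finsupp.single y (x - z) + Finsupp.single z (y - x)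

lemma sum_support_add_smul_threePointShift (ν : ℝ →₀ ℝ) (ε x y z : ℝ) (h : ℝ → ℝ) :
    ∑ t ∈ (ν + ε • threePointShift x y z).support, (ν + ε • threePointShift x y z) t * h t =
      ∑ t ∈ ν.support, ν t * h t + ε * threePointDiff h x y z := by
  have hlc : ∀ μ : ℝ →₀ ℝ, ∑ t ∈ μ.support, μ t * h t = Finsupp.linearCombination ℝ h μ :=
    fun μ => by simp only [Finsupp.linearCombination_apply, Finsupp.sum, smul_eq_mul]
  simp only [hlc, threePointShift, map_add, map_smul, Finsupp.linearCombination_single,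
    smul_eq_mul, threePointDiff]

lemma support_add_smul_threePointShift {ν : ℝ →₀ ℝ} {ε x y z : ℝ} (hx : x ∈ ν.support)
    (hy : y ∈ ν.support) (hz : z ∈ ν.support)
    (hpos : ∀ t ∈ ν.support, 0 < ν t + ε * threePointShift x y z t) :
    (ν + ε • threePointShift x y z).support = ν.support := by
  ext t
  by_cases ht : t ∈ ν.support
  · simpa [ht] using (hpos t ht).ne'
  · have hshift : threePointShift x y z t = 0 := by
      simp [threePointShift, ne_of_mem_of_not_mem hx ht,
        ne_of_mem_of_not_mem hy ht, ne_of_mem_of_not_mem hz ht]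
    simp [ht, hshift, Finsupp.notMem_support_iff.1 ht]

lemma eventually_admissible_add_smul_threePointShift {ν : ℝ →₀ ℝ} {x y z : ℝ}
    (hν : ∀ t, 0 ≤ ν t) (hx : x ∈ ν.support) (hy : y ∈ ν.support) (hz : z ∈ ν.support) :
    ∀ᶠ ε in 𝓝 (0 : ℝ), (∀ t, 0 ≤ (ν + ε • threePointShift x y z) t) ∧
      (ν + ε • threePointShift x y z).support = ν.support := by
  filter_upwards [(eventually_all_finset ν.support).2 fun t ht =>
    eventually_lt_add_mul (threePointShift x y z t)
      ((hν t).lt_of_ne' (Finsupp.mem_support_iff.1 ht))] with ε hε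
  have hsupp := support_add_smul_threePointShift hx hy hz hε
  refine ⟨fun t => ?_, hsupp⟩
  by_cases ht : t ∈ ν.support
  · exact (hε t ht).le
  · rw [Finsupp.notMem_support_iff.1 (hsupp ▸ ht)]

lemma Nfun_add_smul_threePointShift (ν : ℝ →₀ ℝ) (q r ε x y z : ℝ) :
    Nfun (ν + ε • threePointShift x y z) q r =
      Nfun ν q r + ε * threePointDiff (fun t => (1 + r * t) ^ q) x y z :=
  sum_support_add_smul_threePointShift ν ε x y z _

theorem stmt9_general (q ρ α : ℝ) (k : ℕ) (hq : 2 ≤ q)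
    (hρ0 : 0 < ρ) (hρ1 : ρ < 1)
    (ν : ℝ →₀ ℝ) (hνpos : ∀ t, 0 ≤ ν t) (hνsum : ∑ t ∈ ν.support, ν t = 1)
    (hmean : ∑ t ∈ ν.support, ν t * t = 0)
    (hrange : ∀ t ∈ ν.support, -1 ≤ t ∧ t ≤ α)
    (hsupp3 : 3 ≤ ν.support.card) (hsuppk : ν.support.card ≤ k) :
    ∃ ν' : ℝ →₀ ℝ, (∀ t, 0 ≤ ν' t) ∧ (∑ t ∈ ν'.support, ν' t = 1) ∧
      (∑ t ∈ ν'.support, ν' t * t = 0) ∧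
      (∀ t ∈ ν'.support, -1 ≤ t ∧ t ≤ α) ∧
      (∃ t ∈ ν'.support, t ≠ 0) ∧
      ν'.support.card ≤ k ∧
      Rfun ν q ρ < Rfun ν' q ρ := by
  have hq1 : 1 < q := by linarith
  have hlow : ∀ t ∈ ν.support, -1 ≤ t := fun t ht => (hrange t ht).1
  obtain ⟨x, hx, y, hy, z, hz, hxy, hyz⟩ := Finset.exists_lt_lt_of_three_le_card hsupp3
  obtain ⟨t₀, ht₀, ht₀0⟩ : ∃ t ∈ ν.support, t ≠ 0 :=
    if h : x = 0 then ⟨y, hy, (h ▸ hxy).ne'⟩ else ⟨x, hx, h⟩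
  have hN1 := one_lt_Nfun hq1 one_pos le_rfl hνpos hνsum hmean hlow ht₀ ht₀0
  have hNρ := one_lt_Nfun hq1 hρ0 hρ1.le hνpos hνsum hmean hlow ht₀ ht₀0
  have hNρN1 := Nfun_lt_Nfun_one hq1.le hρ0.le hρ1 hνpos hνsum hlow hN1
  have hD1 : 0 < threePointDiff (fun t => (1 + 1 * t) ^ q) x y z := by
    simpa only [one_mul] using threePointDiff_one_add_rpow_pos hq1 (hlow x hx) hxy hyz
  obtain ⟨ε, hR, hnonneg, hsupp⟩ := ((frequently_log_div_log_lt_log_div_log_add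
    (threePointDiff (fun t => (1 + ρ * t) ^ q) x y z) hNρ hNρN1 hD1.ne').and_eventually
    (eventually_admissible_add_smul_threePointShift hνpos hx hy hz)).exists
  have hsum := sum_support_add_smul_threePointShift ν ε x y z
  refine ⟨ν + ε • threePointShift x y z, hnonneg, ?_, ?_, hsupp ▸ hrange,
    ⟨t₀, hsupp ▸ ht₀, ht₀0⟩, hsupp ▸ hsuppk, ?_⟩
  · simpa [hνsum, threePointDiff] using hsum fun _ => 1
  · have h := hsum fun t => t
    simp only [threePointDiff, hmean] at h
    rw [h]
    ring
  · rwa [Rfun, Rfun, Nfun_add_smul_threePointShift, Nfun_add_smul_threePointShift]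

theorem stmt9 (q ρ α : ℝ) (k : ℕ) (hq : 2 ≤ q) (hk : 3 ≤ k)
    (hρ0 : 0 < ρ) (hρ1 : ρ < 1) (hα : 0 < α)
    (ν : ℝ →₀ ℝ) (hνpos : ∀ t, 0 ≤ ν t) (hνsum : ∑ t ∈ ν.support, ν t = 1)
    (hmean : ∑ t ∈ ν.support, ν t * t = 0)
    (hrange : ∀ t ∈ ν.support, -1 ≤ t ∧ t ≤ α)
    (hsupp3 : 3 ≤ ν.support.card) (hsuppk : ν.support.card ≤ k) :
    ∃ ν' : ℝ →₀ ℝ, (∀ t, 0 ≤ ν' t) ∧ (∑ t ∈ ν'.support, ν' t = 1) ∧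
      (∑ t ∈ ν'.support, ν' t * t = 0) ∧
      (∀ t ∈ ν'.support, -1 ≤ t ∧ t ≤ α) ∧
      (∃ t ∈ ν'.support, t ≠ 0) ∧
      ν'.support.card ≤ k ∧
      Rfun ν q ρ < Rfun ν' q ρ :=
  stmt9_general q ρ α k hq hρ0 hρ1 ν hνpos hνsum hmean hrange hsupp3 hsuppk
end

section
/- Let q > 2, z ≥ −1, and 0 < ρ < 1. Then the ratio h(ρ,y,z) := g(1,y,z)/g(ρ,y,z) is strictly increasing in y ≥ −1; in particular, for all −1 ≤ y₁ < y₂ with y₁ ≠ z and y₂ ≠ z it holds that g(1,y₁,z)·g(ρ,y₂,z) < g(1,y₂,z)·g(ρ,y₁,z). -/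
/-!
Monotone L'Hôpital rule: if `f z = g z = 0`, `g'` vanishes only at `z` and `f' / g'` is strictly
increasing, then so is `f / g` (extended by `(f' / g') z` at `z`); this follows from Cauchy's
mean value theorem, first to the right of `z` and then, by reflection, to the left.
Applied to `y ↦ g(1,y,z)` and `y ↦ g(ρ,y,z)` it reduces the claim to their first `y`-derivatives,
and once more to their second derivatives, whose ratio `((1 + y) / (1 + ρy)) ^ (q - 2) / ρ²` is
increasing for `ρ < 1` and `q > 2`. The cross-multiplied inequality follows because
`g(ρ,·,z) > 0` off `z`, `g` being the gap between a strictly convex function and its tangent at `z`.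
-/

/-- `g(ρ,y,z) := (1+ρy)^q − (1+ρz)^q + qρ(z−y)(1+ρz)^{q−1}` (real powers). -/
noncomputable def gfun (q ρ y z : ℝ) : ℝ :=
  (1 + ρ * y) ^ q - (1 + ρ * z) ^ q + q * ρ * (z - y) * (1 + ρ * z) ^ (q - 1)

/-- The ratio `h(ρ,y,z) = g(1,y,z)/g(ρ,y,z)`, continuously extended at `y = z`. -/
noncomputable def hfun (q ρ y z : ℝ) : ℝ :=
  if y = z then (1 + y) ^ (q - 2) / (ρ ^ 2 * (1 + ρ * y) ^ (q - 2))
  else gfun q 1 y z / gfun q ρ y z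

open Set Function

section MonotoneLHopital

variable {f g f' g' R : ℝ → ℝ} {s : Set ℝ} {z : ℝ}

theorem exists_mem_Ioo_sub_eq_mul_sub {x y : ℝ} (hxy : x < y)
    (hf : ∀ t ∈ Icc x y, HasDerivAt f (f' t) t) (hg : ∀ t ∈ Icc x y, HasDerivAt g (g' t) t)
    (hfg : ∀ t ∈ Ioo x y, f' t = R t * g' t) (hg' : ∀ t ∈ Ioo x y, g' t ≠ 0) :
    ∃ ξ ∈ Ioo x y, f y - f x = R ξ * (g y - g x) := by
  obtain ⟨ξ, hξ, h⟩ := exists_ratio_hasDerivAt_eq_ratio_slope f f' hxy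
    (fun t ht => (hf t ht).continuousAt.continuousWithinAt)
    (fun t ht => hf t (Ioo_subset_Icc_self ht)) g g'
    (fun t ht => (hg t ht).continuousAt.continuousWithinAt)
    (fun t ht => hg t (Ioo_subset_Icc_self ht))
  refine ⟨ξ, hξ, mul_right_cancel₀ (hg' ξ hξ) ?_⟩
  rw [hfg ξ hξ] at h
  linear_combination -h

theorem strictMonoOn_or_strictAntiOn_of_hasDerivAt_ne_zero {D : Set ℝ} (hD : Convex ℝ D)
    (hgc : ContinuousOn g D) (hg : ∀ y ∈ interior D, HasDerivAt g (g' y) y)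
    (hg' : ∀ y ∈ interior D, g' y ≠ 0) : StrictMonoOn g D ∨ StrictAntiOn g D := by
  rcases hasDerivWithinAt_forall_lt_or_forall_gt_of_forall_ne hD.interior
    (fun y hy => (hg y hy).hasDerivWithinAt) hg' with hneg | hpos
  · exact .inr <| strictAntiOn_of_deriv_neg hD hgc fun y hy => (hg y hy).deriv ▸ hneg y hy
  · exact .inl <| strictMonoOn_of_deriv_pos hD hgc fun y hy => (hg y hy).deriv ▸ hpos y hy

theorem strictMonoOn_update_div_of_isLeast (hs : s.OrdConnected) (hz : IsLeast s z)
    (hf : ∀ y ∈ s, HasDerivAt f (f' y) y) (hg : ∀ y ∈ s, HasDerivAt g (g' y) y)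
    (hfz : f z = 0) (hgz : g z = 0) (hfg : ∀ y ∈ s, f' y = R y * g' y)
    (hR : StrictMonoOn R s) (hg' : ∀ y ∈ s, z < y → g' y ≠ 0) :
    StrictMonoOn (update (f / g) z (R z)) s := by
  have mvt : ∀ x ∈ s, ∀ y ∈ s, x < y → ∃ ξ ∈ Ioo x y, f y - f x = R ξ * (g y - g x) := by
    intro x hx y hy hxy
    have hxy_sub : Icc x y ⊆ s := hs.out hx hy
    exact exists_mem_Ioo_sub_eq_mul_sub hxy (fun t ht => hf t (hxy_sub ht))
      (fun t ht => hg t (hxy_sub ht)) (fun t ht => hfg t (hxy_sub (Ioo_subset_Icc_self ht)))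
      fun t ht => hg' t (hxy_sub (Ioo_subset_Icc_self ht)) ((hz.2 hx).trans_lt ht.1)
  have hinterior : interior s ⊆ Ioi z := by
    simpa only [interior_Ici] using interior_mono fun y hy => mem_Ici.2 (hz.2 hy)
  -- `g` moves away from `g z = 0` monotonically, so `g b` has the sign of `g b - g a`
  have hgrowth : ∀ a ∈ s, ∀ b ∈ s, a < b → 0 < (g b - g a) / g b := by
    intro a ha b hb hab
    rcases strictMonoOn_or_strictAntiOn_of_hasDerivAt_ne_zero hs.convex
      (fun y hy => (hg y hy).continuousAt.continuousWithinAt)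
      (fun y hy => hg y (interior_subset hy))
      (fun y hy => hg' y (interior_subset hy) (hinterior hy))
      with hmono | hanti
    · have h0 := hgz ▸ hmono.monotoneOn hz.1 ha (hz.2 ha)
      exact div_pos (sub_pos.2 (hmono ha hb hab)) (by linarith [hmono ha hb hab])
    · have h0 := hgz ▸ hanti.antitoneOn hz.1 ha (hz.2 ha)
      exact div_pos_of_neg_of_neg (sub_neg.2 (hanti ha hb hab)) (by linarith [hanti ha hb hab])
  intro y₁ hy₁ y₂ hy₂ h₁₂
  obtain ⟨ξ, hξ, hξy₁, hQ₁, hf₁⟩ : ∃ ξ ∈ s, ξ ≤ y₁ ∧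
      update (f / g) z (R z) y₁ = R ξ ∧ f y₁ = R ξ * g y₁ := by
    rcases (hz.2 hy₁).eq_or_lt with rfl | hzy₁
    · exact ⟨z, hz.1, le_rfl, update_self .., by simp [hfz, hgz]⟩
    · obtain ⟨ξ, hξ, h⟩ := mvt z hz.1 y₁ hy₁ hzy₁
      rw [hfz, hgz, sub_zero, sub_zero] at h
      have hg₁ : g y₁ ≠ 0 := fun h => by simpa [h] using hgrowth z hz.1 y₁ hy₁ hzy₁
      refine ⟨ξ, hs.out hz.1 hy₁ (Ioo_subset_Icc_self hξ), hξ.2.le, ?_, h⟩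
      rw [update_of_ne hzy₁.ne', Pi.div_apply, h, mul_div_cancel_right₀ _ hg₁]
  obtain ⟨η, hη, hf₂⟩ := mvt y₁ hy₁ y₂ hy₂ h₁₂
  have hRξη : R ξ < R η := hR hξ (hs.out hy₁ hy₂ (Ioo_subset_Icc_self hη)) (hξy₁.trans_lt hη.1)
  have hg₂ := hgrowth y₁ hy₁ y₂ hy₂ h₁₂
  have hQ₂ : update (f / g) z (R z) y₂ = R ξ + (R η - R ξ) * ((g y₂ - g y₁) / g y₂) := by
    have : g y₂ ≠ 0 := fun h => by simp [h] at hg₂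
    rw [update_of_ne ((hz.2 hy₁).trans_lt h₁₂).ne', Pi.div_apply]
    field_simp
    linear_combination hf₂ + hf₁
  rw [hQ₁, hQ₂]
  exact lt_add_of_pos_right _ (mul_pos (sub_pos.2 hRξη) hg₂)

theorem strictMonoOn_update_div_of_isGreatest (hs : s.OrdConnected) (hz : IsGreatest s z)
    (hf : ∀ y ∈ s, HasDerivAt f (f' y) y) (hg : ∀ y ∈ s, HasDerivAt g (g' y) y)
    (hfz : f z = 0) (hgz : g z = 0) (hfg : ∀ y ∈ s, f' y = R y * g' y)
    (hR : StrictMonoOn R s) (hg' : ∀ y ∈ s, y < z → g' y ≠ 0) :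
    StrictMonoOn (update (f / g) z (R z)) s := by
  -- reflect in `z`: `t ↦ -(f/g)(2z - t)` is the ratio of `f (2z - ·)` and `-g (2z - ·)`
  set σ : ℝ → ℝ := fun t => 2 * z - t
  have hσσ : ∀ t, σ (σ t) = t := fun t => by simp [σ]
  have hσz : σ z = z := by simp only [σ]; ring
  have hσ_anti : StrictAnti σ := fun a b hab => by simp only [σ]; linarith
  have hreflected := strictMonoOn_update_div_of_isLeast (s := σ ⁻¹' s) (z := z)
    (f := fun t => f (σ t)) (g := fun t => -g (σ t)) (f' := fun t => -f' (σ t))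
    (g' := fun t => g' (σ t)) (R := fun t => -R (σ t)) (hs.preimage_anti hσ_anti.antitone)
    ⟨by simpa [hσz] using hz.1, fun t ht => by have := hz.2 ht; simp only [σ] at this; linarith⟩
    (fun t ht => (hf _ ht).comp_const_sub (2 * z) t)
    (fun t ht => by simpa only [neg_neg] using ((hg _ ht).comp_const_sub (2 * z) t).fun_neg)
    (by simp [hσz, hfz]) (by simp [hσz, hgz]) (fun t ht => by simp [hfg _ ht])
    (fun a ha b hb hab => neg_lt_neg (hR hb ha (hσ_anti hab)))
    (fun t ht hzt => hg' _ ht (by simpa [hσz] using hσ_anti hzt))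
  have hupdate : ∀ t, update ((fun t => f (σ t)) / fun t => -g (σ t)) z (-R (σ z)) t =
      -update (f / g) z (R z) (σ t) := by
    intro t
    rcases eq_or_ne t z with rfl | htz
    · simp [hσz]
    · have : σ t ≠ z := fun h => htz (by rw [← hσσ t, h, hσz])
      simp [update_of_ne htz, update_of_ne this, div_neg]
  intro a ha b hb hab
  have := hreflected (a := σ b) (by simpa [hσσ] using hb) (b := σ a) (by simpa [hσσ] using ha)
    (hσ_anti hab)
  simpa [hupdate, hσσ] using this

theorem strictMonoOn_update_div (hs : s.OrdConnected) (hz : z ∈ s)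
    (hf : ∀ y ∈ s, HasDerivAt f (f' y) y) (hg : ∀ y ∈ s, HasDerivAt g (g' y) y)
    (hfz : f z = 0) (hgz : g z = 0) (hfg : ∀ y ∈ s, f' y = R y * g' y)
    (hR : StrictMonoOn R s) (hg' : ∀ y ∈ s, y ≠ z → g' y ≠ 0) :
    StrictMonoOn (update (f / g) z (R z)) s := by
  have hleft := strictMonoOn_update_div_of_isGreatest (hs.inter ordConnected_Iic)
    ⟨⟨hz, self_mem_Iic⟩, fun y hy => hy.2⟩ (fun y hy => hf y hy.1) (fun y hy => hg y hy.1) hfz hgz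
    (fun y hy => hfg y hy.1) (hR.mono inter_subset_left) fun y hy h => hg' y hy.1 h.ne
  have hright := strictMonoOn_update_div_of_isLeast (hs.inter ordConnected_Ici)
    ⟨⟨hz, self_mem_Ici⟩, fun y hy => hy.2⟩ (fun y hy => hf y hy.1) (fun y hy => hg y hy.1) hfz hgz
    (fun y hy => hfg y hy.1) (hR.mono inter_subset_left) fun y hy h => hg' y hy.1 h.ne'
  have := hleft.union hright ⟨⟨hz, self_mem_Iic⟩, fun y hy => hy.2⟩
    ⟨⟨hz, self_mem_Ici⟩, fun y hy => hy.2⟩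
  rwa [← inter_union_distrib_left, Iic_union_Ici, inter_univ] at this

end MonotoneLHopital

section

variable {q ρ y z : ℝ}

theorem one_add_mul_pos (hρ0 : 0 ≤ ρ) (hρ1 : ρ < 1) (hy : -1 ≤ y) : 0 < 1 + ρ * y := by
  nlinarith

noncomputable def gfunDeriv (q ρ y z : ℝ) : ℝ :=
  q * ρ * ((1 + ρ * y) ^ (q - 1) - (1 + ρ * z) ^ (q - 1))

theorem hasDerivAt_one_add_mul_rpow {p : ℝ} (hp : 1 ≤ p) (ρ y : ℝ) :
    HasDerivAt (fun y => (1 + ρ * y) ^ p) (p * ρ * (1 + ρ * y) ^ (p - 1)) y := by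
  convert (((hasDerivAt_id' y).const_mul ρ).const_add 1).rpow_const (Or.inr hp) using 1
  ring

theorem hasDerivAt_gfun (hq : 1 ≤ q) (ρ y z : ℝ) :
    HasDerivAt (gfun q ρ · z) (gfunDeriv q ρ y z) y := by
  have h := ((hasDerivAt_one_add_mul_rpow hq ρ y).sub_const ((1 + ρ * z) ^ q)).add
    ((((hasDerivAt_id' y).const_sub z).const_mul (q * ρ)).mul_const ((1 + ρ * z) ^ (q - 1)))
  exact h.congr_deriv (by simp only [gfunDeriv]; ring)

theorem hasDerivAt_gfunDeriv (hq : 2 ≤ q) (ρ y z : ℝ) :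
    HasDerivAt (gfunDeriv q ρ · z) (q * (q - 1) * ρ ^ 2 * (1 + ρ * y) ^ (q - 2)) y := by
  refine (((hasDerivAt_one_add_mul_rpow (by linarith) ρ y).sub_const
    ((1 + ρ * z) ^ (q - 1))).const_mul (q * ρ)).congr_deriv ?_
  rw [show q - 1 - 1 = q - 2 by ring]
  ring

theorem gfunDeriv_ne_zero (hq : 1 < q) (hρ : ρ ≠ 0) (hy : 0 ≤ 1 + ρ * y) (hz : 0 ≤ 1 + ρ * z)
    (hyz : y ≠ z) : gfunDeriv q ρ y z ≠ 0 := by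
  have hpow : (1 + ρ * y) ^ (q - 1) ≠ (1 + ρ * z) ^ (q - 1) := fun h =>
    hyz (mul_left_cancel₀ hρ (add_left_cancel (Real.rpow_left_injOn (by linarith) hy hz h)))
  exact mul_ne_zero (mul_ne_zero (by linarith) hρ) (sub_ne_zero.2 hpow)

-- `g` is the gap between `x ↦ x ^ q` and its tangent at `1 + ρz`: Bernoulli's inequality.
theorem gfun_pos (hq : 1 < q) (hρ : ρ ≠ 0) (hy : 0 ≤ 1 + ρ * y) (hz : 0 < 1 + ρ * z)
    (hyz : y ≠ z) : 0 < gfun q ρ y z := by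
  set v := 1 + ρ * z
  have hs : -1 ≤ ρ * (y - z) / v := by
    rw [le_div_iff₀ hz]; linarith
  have hs0 : ρ * (y - z) / v ≠ 0 := div_ne_zero (mul_ne_zero hρ (sub_ne_zero.2 hyz)) hz.ne'
  have hbern := one_add_mul_self_lt_rpow_one_add hs hs0 hq
  rw [show 1 + ρ * (y - z) / v = (1 + ρ * y) / v by field_simp; ring,
    Real.div_rpow hy hz.le, lt_div_iff₀ (by positivity)] at hbern
  have htangent : (1 + q * (ρ * (y - z) / v)) * v ^ q = v ^ q + q * ρ * (y - z) * v ^ (q - 1) := by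
    rw [Real.rpow_sub_one hz.ne']
    field_simp
  rw [gfun]
  linarith

theorem strictMonoOn_rpow_div_rpow {p : ℝ} (hp : 0 < p) (hρ0 : 0 < ρ) (hρ1 : ρ < 1) :
    StrictMonoOn (fun y => (1 + y) ^ p / (ρ ^ 2 * (1 + ρ * y) ^ p)) (Ici (-1)) := by
  intro a ha b hb hab
  have ha' : -1 ≤ a := ha
  have hρa := one_add_mul_pos hρ0.le hρ1 ha
  have hρb := one_add_mul_pos hρ0.le hρ1 hb
  have hquot : (1 + a) / (1 + ρ * a) < (1 + b) / (1 + ρ * b) := by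
    rw [div_lt_div_iff₀ hρa hρb]
    nlinarith [mul_pos (sub_pos.2 hρ1) (sub_pos.2 hab)]
  have h := Real.rpow_lt_rpow (div_nonneg (by linarith) hρa.le) hquot hp
  rw [Real.div_rpow (by linarith) hρa.le, Real.div_rpow (by linarith) hρb.le] at h
  simp only [mul_comm (ρ ^ 2), ← div_div]
  exact div_lt_div_of_pos_right h (by positivity)

theorem hfun_eq_update (q ρ z : ℝ) :
    (hfun q ρ · z) = update ((gfun q 1 · z) / (gfun q ρ · z)) z
      ((1 + z) ^ (q - 2) / (ρ ^ 2 * (1 + ρ * z) ^ (q - 2))) := by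
  ext y
  rcases eq_or_ne y z with rfl | hyz
  · simp [hfun]
  · simp [hfun, hyz]

theorem strictMonoOn_update_gfunDeriv_div (hq : 2 < q) (hρ0 : 0 < ρ) (hρ1 : ρ < 1)
    (hz : -1 ≤ z) :
    StrictMonoOn (update ((gfunDeriv q 1 · z) / (gfunDeriv q ρ · z)) z
      ((1 + z) ^ (q - 2) / (ρ ^ 2 * (1 + ρ * z) ^ (q - 2)))) (Ici (-1)) := by
  refine strictMonoOn_update_div
    (R := fun y => (1 + y) ^ (q - 2) / (ρ ^ 2 * (1 + ρ * y) ^ (q - 2))) ordConnected_Ici hz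
    (fun y _ => hasDerivAt_gfunDeriv hq.le 1 y z)
    (fun y _ => hasDerivAt_gfunDeriv hq.le ρ y z) (by simp [gfunDeriv]) (by simp [gfunDeriv])
    (fun y hy => ?_) (strictMonoOn_rpow_div_rpow (by linarith) hρ0 hρ1) fun y hy _ => ?_
  all_goals have := Real.rpow_pos_of_pos (one_add_mul_pos hρ0.le hρ1 hy) (q - 2)
  · simp only [one_pow, one_mul, mul_one]
    rw [div_mul_eq_mul_div, eq_div_iff (by positivity)]
    ring
  · have : 0 < q * (q - 1) := by nlinarith
    positivity

theorem strictMonoOn_hfun (hq : 2 < q) (hρ0 : 0 < ρ) (hρ1 : ρ < 1) (hz : -1 ≤ z) :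
    StrictMonoOn (hfun q ρ · z) (Ici (-1)) := by
  have hderiv_ne : ∀ y ∈ Ici (-1 : ℝ), y ≠ z → gfunDeriv q ρ y z ≠ 0 := fun y hy hyz =>
    gfunDeriv_ne_zero (by linarith) hρ0.ne' (one_add_mul_pos hρ0.le hρ1 hy).le
      (one_add_mul_pos hρ0.le hρ1 hz).le hyz
  have hq1 : 1 ≤ q := by linarith
  have h := strictMonoOn_update_div ordConnected_Ici hz (fun y _ => hasDerivAt_gfun hq1 1 y z)
    (fun y _ => hasDerivAt_gfun hq1 ρ y z) (by simp [gfun]) (by simp [gfun])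
    (fun y hy => ?_) (strictMonoOn_update_gfunDeriv_div hq hρ0 hρ1 hz) hderiv_ne
  · rwa [update_self, ← hfun_eq_update] at h
  rcases eq_or_ne y z with rfl | hyz
  · simp [gfunDeriv]
  · rw [update_of_ne hyz, Pi.div_apply, div_mul_cancel₀ _ (hderiv_ne y hy hyz)]

end

theorem stmt11 (q ρ z : ℝ) (hq : 2 < q) (hρ0 : 0 < ρ) (hρ1 : ρ < 1) (hz : -1 ≤ z) :
    StrictMonoOn (fun y => hfun q ρ y z) (Set.Ici (-1 : ℝ)) ∧
      ∀ y₁ y₂ : ℝ, -1 ≤ y₁ → y₁ < y₂ → y₁ ≠ z → y₂ ≠ z →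
        gfun q 1 y₁ z * gfun q ρ y₂ z < gfun q 1 y₂ z * gfun q ρ y₁ z := by
  have hmono := strictMonoOn_hfun hq hρ0 hρ1 hz
  refine ⟨hmono, fun y₁ y₂ hy₁ h₁₂ hy₁z hy₂z => ?_⟩
  have hy₂ : -1 ≤ y₂ := hy₁.trans h₁₂.le
  have hg : ∀ y, -1 ≤ y → y ≠ z → 0 < gfun q ρ y z := fun y hy hyz =>
    gfun_pos (by linarith) hρ0.ne' (one_add_mul_pos hρ0.le hρ1 hy).le
      (one_add_mul_pos hρ0.le hρ1 hz) hyz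
  have h := hmono hy₁ hy₂ h₁₂
  simp only [hfun, if_neg hy₁z, if_neg hy₂z] at h
  exact (div_lt_div_iff₀ (hg y₁ hy₁ hy₁z) (hg y₂ hy₂ hy₂z)).1 h
end

section
/- Let q ≥ 2, 0 < ρ < 1, and x₀ > 0. Then the function y ↦ R_q(ρ,x₀,y) is strictly increasing on (0, 1/x₀]: for all y₁, y₂ with 0 < y₁ < y₂ ≤ 1/x₀ it holds that R_q(ρ,x₀,y₁) < R_q(ρ,x₀,y₂). -/
/-!
Put `f_y(t) = log N_q(1,t,y)`. Since `N_q(ρ,x,y) = N_q(1,ρx,y)`, we have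
`R_q(ρ,x,y) = f_y(ρx) / f_y(x)`, so it suffices that `t ↦ f_{y₂}(t) / f_{y₁}(t)` is strictly
decreasing on `(0, 1/y₂]`. As `f_y(0) = 0`, the monotone form of l'Hôpital's rule reduces this to
the same property of `f_{y₂}' / f_{y₁}'`, i.e. to `∂ₜ log f_y'(t)` being strictly decreasing in `y`.
With `D = y(1+t)^q + (1-yt)^q` and `R = (1+t)^(q-1) - (1-yt)^(q-1)` one has `f_y' = q y R / D`
and `∂ₜ log f_y' = ∂ₜR / R - q y R / D`. The first term is nonincreasing in `y` by the tangent-line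
inequality for `x ↦ x^(q-1)`, the second is strictly increasing in `y`.
-/

/-- `N_q(ρ,x,y) := (y/(y+1))(1+ρx)^q + (1/(y+1))(1−ρyx)^q` (real powers). -/
noncomputable def Nq (q ρ x y : ℝ) : ℝ :=
  (y / (y + 1)) * (1 + ρ * x) ^ q + (1 / (y + 1)) * (1 - ρ * y * x) ^ q

/-- `R_q(ρ,x,y) := ln N_q(ρ,x,y) / ln N_q(1,x,y)`. -/
noncomputable def Rq (q ρ x y : ℝ) : ℝ :=
  Real.log (Nq q ρ x y) / Real.log (Nq q 1 x y)

open Real Set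

section MonotoneLHopital

variable {f g f' g' : ℝ → ℝ} {a b : ℝ}

lemma strictMonoOn_Ioo_of_hasDerivAt_pos (hf : ∀ x ∈ Ioo a b, HasDerivAt f (f' x) x)
    (hf' : ∀ x ∈ Ioo a b, 0 < f' x) : StrictMonoOn f (Ioo a b) :=
  strictMonoOn_of_hasDerivWithinAt_pos (convex_Ioo a b)
    (fun x hx => (hf x hx).continuousAt.continuousWithinAt)
    (by simpa only [interior_Ioo] using fun x hx => (hf x hx).hasDerivWithinAt)
    (by simpa only [interior_Ioo] using hf')

lemma strictAntiOn_Ioo_of_hasDerivAt_neg (hf : ∀ x ∈ Ioo a b, HasDerivAt f (f' x) x)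
    (hf' : ∀ x ∈ Ioo a b, f' x < 0) : StrictAntiOn f (Ioo a b) :=
  strictAntiOn_of_hasDerivWithinAt_neg (convex_Ioo a b)
    (fun x hx => (hf x hx).continuousAt.continuousWithinAt)
    (by simpa only [interior_Ioo] using fun x hx => (hf x hx).hasDerivWithinAt)
    (by simpa only [interior_Ioo] using hf')

lemma antitoneOn_Ioo_of_hasDerivAt_nonpos (hf : ∀ x ∈ Ioo a b, HasDerivAt f (f' x) x)
    (hf' : ∀ x ∈ Ioo a b, f' x ≤ 0) : AntitoneOn f (Ioo a b) :=
  antitoneOn_of_hasDerivWithinAt_nonpos (convex_Ioo a b)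
    (fun x hx => (hf x hx).continuousAt.continuousWithinAt)
    (by simpa only [interior_Ioo] using fun x hx => (hf x hx).hasDerivWithinAt)
    (by simpa only [interior_Ioo] using hf')

/-- Monotone form of l'Hôpital's rule. -/
theorem strictAntiOn_div_of_strictAntiOn_deriv_div (hfc : ContinuousOn f (Icc a b))
    (hgc : ContinuousOn g (Icc a b)) (hf : ∀ x ∈ Ioo a b, HasDerivAt f (f' x) x)
    (hg : ∀ x ∈ Ioo a b, HasDerivAt g (g' x) x) (hfa : f a = 0) (hga : g a = 0)
    (hg' : ∀ x ∈ Ioo a b, 0 < g' x) (hf'g' : StrictAntiOn (fun x => f' x / g' x) (Ioo a b)) :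
    StrictAntiOn (fun x => f x / g x) (Ioc a b) := by
  have hg_pos : ∀ x ∈ Ioc a b, 0 < g x := fun x hx => by
    have hmono : StrictMonoOn g (Icc a b) :=
      strictMonoOn_of_hasDerivWithinAt_pos (convex_Icc a b) hgc
        (by simpa only [interior_Icc] using fun x hx => (hg x hx).hasDerivWithinAt)
        (by simpa only [interior_Icc] using hg')
    simpa [hga] using hmono (left_mem_Icc.2 (hx.1.le.trans hx.2)) (Ioc_subset_Icc_self hx) hx.1
  refine strictAntiOn_of_hasDerivWithinAt_neg (convex_Ioc a b)
    ((hfc.mono Ioc_subset_Icc_self).div (hgc.mono Ioc_subset_Icc_self)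
      fun x hx => (hg_pos x hx).ne')
    (f' := fun x => (f' x * g x - f x * g' x) / g x ^ 2) ?_ ?_ <;> rw [interior_Ioc]
  · exact fun x hx =>
      ((hf x hx).div (hg x hx) (hg_pos x (Ioo_subset_Ioc_self hx)).ne').hasDerivWithinAt
  · intro x hx
    have hgx := hg_pos x (Ioo_subset_Ioc_self hx)
    obtain ⟨c, hc, hcauchy⟩ := exists_ratio_hasDerivAt_eq_ratio_slope f f' hx.1
      (hfc.mono (Icc_subset_Icc_right hx.2.le)) (fun y hy => hf y ⟨hy.1, hy.2.trans hx.2⟩)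
      g g' (hgc.mono (Icc_subset_Icc_right hx.2.le)) (fun y hy => hg y ⟨hy.1, hy.2.trans hx.2⟩)
    have hgc' := hg' c ⟨hc.1, hc.2.trans hx.2⟩
    have hslope : f' c / g' c = f x / g x := by
      rw [hfa, hga, sub_zero, sub_zero] at hcauchy
      rw [div_eq_div_iff hgc'.ne' hgx.ne']
      linarith
    have := hf'g' ⟨hc.1, hc.2.trans hx.2⟩ hx hc.2
    simp only [hslope] at this
    rw [div_lt_div_iff₀ (hg' x hx) hgx] at this
    exact div_neg_of_neg_of_pos (by linarith) (by positivity)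

end MonotoneLHopital

lemma rpow_eq_rpow_sub_one_mul {x : ℝ} (hx : x ≠ 0) (p : ℝ) : x ^ p = x ^ (p - 1) * x := by
  rw [← rpow_add_one hx, sub_add_cancel]

lemma rpow_sub_one_mul_add_le_rpow {p a b : ℝ} (hp : 1 ≤ p) (ha : 0 < a) (hb : 0 ≤ b) :
    a ^ (p - 1) * (a + p * (b - a)) ≤ b ^ p := by
  have h := one_add_mul_self_le_rpow_one_add (s := b / a - 1) (by linarith [div_nonneg hb ha.le]) hp
  rw [add_sub_cancel, div_rpow hb ha.le, le_div_iff₀ (rpow_pos_of_pos ha p)] at h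
  calc a ^ (p - 1) * (a + p * (b - a)) = (1 + p * (b / a - 1)) * a ^ p := by
        rw [rpow_eq_rpow_sub_one_mul ha.ne' p]; field_simp
    _ ≤ b ^ p := h

noncomputable section

def powSum (q y t : ℝ) : ℝ := y * (1 + t) ^ q + (1 - y * t) ^ q

def powDiff (p y t : ℝ) : ℝ := (1 + t) ^ p - (1 - y * t) ^ p

def powAdd (p y t : ℝ) : ℝ := (1 + t) ^ p + y * (1 - y * t) ^ p

def derivLogNq (q y t : ℝ) : ℝ := q * y * powDiff (q - 1) y t / powSum q y t

end

section TwoPoint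

variable {p q y t : ℝ}

lemma Nq_one_eq_powSum_div (q x y : ℝ) : Nq q 1 x y = powSum q y x / (y + 1) := by
  simp only [Nq, powSum, one_mul]; ring

lemma Nq_eq_Nq_one_mul (q ρ x y : ℝ) : Nq q ρ x y = Nq q 1 (ρ * x) y := by
  simp only [Nq]; ring_nf

lemma powSum_pos (hy : 0 < y) (ht : -1 < t) (hyt : y * t ≤ 1) : 0 < powSum q y t := by
  unfold powSum; have := rpow_pos_of_pos (by linarith : 0 < 1 + t) q
  have := rpow_nonneg (by linarith : 0 ≤ 1 - y * t) q
  positivity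

lemma powDiff_pos (hp : 0 < p) (hy : -1 < y) (ht : 0 < t) (hyt : y * t ≤ 1) :
    0 < powDiff p y t :=
  sub_pos.2 (rpow_lt_rpow (by linarith) (by nlinarith) hp)

lemma derivLogNq_pos (hq : 1 < q) (hy : 0 < y) (ht : 0 < t) (hyt : y * t ≤ 1) :
    0 < derivLogNq q y t := by
  have := powDiff_pos (sub_pos.2 hq) (by linarith) ht hyt
  have := powSum_pos (q := q) hy (by linarith) hyt
  unfold derivLogNq; positivity

lemma one_add_lt_powSum (hq : 1 < q) (hy : 0 < y) (ht : 0 < t) (hyt : y * t ≤ 1) :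
    1 + y < powSum q y t := by
  have h₁ := one_add_mul_self_lt_rpow_one_add (by linarith) ht.ne' hq
  have h₂ := one_add_mul_self_le_rpow_one_add (s := -(y * t)) (by linarith) hq.le
  rw [← sub_eq_add_neg] at h₂
  unfold powSum; nlinarith

lemma log_Nq_pos (hq : 1 < q) (hy : 0 < y) (ht : 0 < t) (hyt : y * t ≤ 1) :
    0 < log (Nq q 1 t y) := by
  rw [Nq_one_eq_powSum_div]
  exact log_pos ((one_lt_div (by linarith)).2 (by linarith [one_add_lt_powSum hq hy ht hyt]))

lemma hasDerivAt_powSum (hq : 1 ≤ q) (y t : ℝ) :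
    HasDerivAt (fun t => powSum q y t) (q * y * powDiff (q - 1) y t) t := by
  have hA := ((hasDerivAt_id t).const_add 1).rpow_const (p := q) (Or.inr hq)
  have hB := (((hasDerivAt_id t).const_mul y).const_sub 1).rpow_const (p := q) (Or.inr hq)
  refine ((hA.const_mul y).add hB).congr_deriv ?_
  simp only [powDiff, id]; ring

lemma hasDerivAt_powDiff (hp : 1 ≤ p) (y t : ℝ) :
    HasDerivAt (fun t => powDiff p y t) (p * powAdd (p - 1) y t) t := by
  have hA := ((hasDerivAt_id t).const_add 1).rpow_const (p := p) (Or.inr hp)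
  have hB := (((hasDerivAt_id t).const_mul y).const_sub 1).rpow_const (p := p) (Or.inr hp)
  refine (hA.sub hB).congr_deriv ?_
  simp only [powAdd, id]; ring

lemma hasDerivAt_log_Nq (hq : 1 ≤ q) (hy : y + 1 ≠ 0) (hD : powSum q y t ≠ 0) :
    HasDerivAt (fun t => log (Nq q 1 t y)) (derivLogNq q y t) t := by
  simp only [Nq_one_eq_powSum_div]
  convert ((hasDerivAt_powSum hq y t).div_const (y + 1)).log (div_ne_zero hD hy) using 1
  unfold derivLogNq; field_simp

lemma hasDerivAt_powSum_weight (hB : 1 - y * t ≠ 0) :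
    HasDerivAt (fun y => powSum q y t) ((1 + t) ^ q - q * t * (1 - y * t) ^ (q - 1)) y := by
  have hB' := (((hasDerivAt_id y).mul_const t).const_sub 1).rpow_const (p := q) (Or.inl hB)
  refine (((hasDerivAt_id y).mul_const _).add hB').congr_deriv ?_
  simp only [id]; ring

lemma hasDerivAt_powDiff_weight (hB : 1 - y * t ≠ 0) :
    HasDerivAt (fun y => powDiff p y t) (p * t * (1 - y * t) ^ (p - 1)) y := by
  have hB' := (((hasDerivAt_id y).mul_const t).const_sub 1).rpow_const (p := p) (Or.inl hB)
  refine (hB'.const_sub _).congr_deriv ?_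
  simp only [id]; ring

lemma hasDerivAt_powAdd_weight (hB : 1 - y * t ≠ 0) :
    HasDerivAt (fun y => powAdd p y t)
      ((1 - y * t) ^ p - p * y * t * (1 - y * t) ^ (p - 1)) y := by
  have hB' := (((hasDerivAt_id y).mul_const t).const_sub 1).rpow_const (p := p) (Or.inl hB)
  refine (((hasDerivAt_id y).mul hB').const_add _).congr_deriv ?_
  simp only [id]; ring

lemma mul_lt_one_of_mem_Ioo (ht : 0 < t) (hy : y ∈ Ioo 0 (1 / t)) : y * t < 1 :=
  (lt_div_iff₀ ht).1 hy.2

lemma one_sub_mul_pos_of_mem_Ioo (ht : 0 < t) (hy : y ∈ Ioo 0 (1 / t)) : 0 < 1 - y * t :=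
  sub_pos.2 (mul_lt_one_of_mem_Ioo ht hy)

lemma antitoneOn_powAdd_div_powDiff (hp : 1 ≤ p) (ht : 0 < t) :
    AntitoneOn (fun y => powAdd (p - 1) y t / powDiff p y t) (Ioo 0 (1 / t)) := by
  have hA : 0 < 1 + t := by linarith
  have hR : ∀ y ∈ Ioo 0 (1 / t), 0 < powDiff p y t := fun y hy =>
    powDiff_pos (by linarith) (by linarith [hy.1]) ht (mul_lt_one_of_mem_Ioo ht hy).le
  refine antitoneOn_Ioo_of_hasDerivAt_nonpos (fun y hy =>
    (hasDerivAt_powAdd_weight (one_sub_mul_pos_of_mem_Ioo ht hy).ne').div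
      (hasDerivAt_powDiff_weight (one_sub_mul_pos_of_mem_Ioo ht hy).ne') (hR y hy).ne')
    fun y hy => div_nonpos_of_nonpos_of_nonneg ?_ (sq_nonneg _)
  have hB := one_sub_mul_pos_of_mem_Ioo ht hy
  have key : ((1 - y * t) ^ (p - 1) - (p - 1) * y * t * (1 - y * t) ^ (p - 1 - 1)) * powDiff p y t
      - powAdd (p - 1) y t * (p * t * (1 - y * t) ^ (p - 1))
      = (1 - y * t) ^ (p - 1 - 1) *
        ((1 + t) ^ (p - 1) * ((1 + t) + p * ((1 - y * t) - (1 + t))) - (1 - y * t) ^ p) := by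
    simp only [powDiff, powAdd]
    rw [rpow_eq_rpow_sub_one_mul hA.ne' p, rpow_eq_rpow_sub_one_mul hB.ne' p,
      rpow_eq_rpow_sub_one_mul hB.ne' (p - 1)]
    ring
  rw [key]
  exact mul_nonpos_of_nonneg_of_nonpos (rpow_nonneg hB.le _)
    (sub_nonpos.2 (rpow_sub_one_mul_add_le_rpow hp hA hB.le))

lemma strictMonoOn_mul_powDiff_div_powSum (hq : 1 < q) (ht : 0 < t) :
    StrictMonoOn (fun y => y * powDiff (q - 1) y t / powSum q y t) (Ioo 0 (1 / t)) := by
  have hA : 0 < 1 + t := by linarith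
  have hD : ∀ y ∈ Ioo 0 (1 / t), 0 < powSum q y t := fun y hy =>
    powSum_pos hy.1 (by linarith) (mul_lt_one_of_mem_Ioo ht hy).le
  refine strictMonoOn_Ioo_of_hasDerivAt_pos (fun y hy =>
    ((hasDerivAt_id' y).fun_mul (hasDerivAt_powDiff_weight (p := q - 1)
      (one_sub_mul_pos_of_mem_Ioo ht hy).ne')).fun_div
      (hasDerivAt_powSum_weight (one_sub_mul_pos_of_mem_Ioo ht hy).ne') (hD y hy).ne')
    fun y hy => div_pos ?_ (pow_pos (hD y hy) 2)
  have hB := one_sub_mul_pos_of_mem_Ioo ht hy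
  have key : (1 * powDiff (q - 1) y t + y * ((q - 1) * t * (1 - y * t) ^ (q - 1 - 1)))
        * powSum q y t
      - y * powDiff (q - 1) y t * ((1 + t) ^ q - q * t * (1 - y * t) ^ (q - 1))
      = (1 - y * t) ^ (q - 1 - 1) *
        ((1 + t) ^ (q - 1) * ((1 - y * t) + (q - 1) * t * y * (1 + y)) - (1 - y * t) ^ q) := by
    simp only [powDiff, powSum]
    rw [rpow_eq_rpow_sub_one_mul hA.ne' q, rpow_eq_rpow_sub_one_mul hB.ne' q,
      rpow_eq_rpow_sub_one_mul hB.ne' (q - 1)]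
    ring
  have hAB : (1 - y * t) ^ (q - 1) < (1 + t) ^ (q - 1) :=
    rpow_lt_rpow hB.le (by nlinarith [hy.1]) (by linarith)
  have hBq := rpow_eq_rpow_sub_one_mul hB.ne' q
  rw [key]
  refine mul_pos (rpow_pos_of_pos hB _) (sub_pos.2 ?_)
  have : 0 < (1 + t) ^ (q - 1) * ((q - 1) * t * y * (1 + y)) := by
    have := hy.1; have := rpow_pos_of_pos hA (q - 1); have : 0 < q - 1 := by linarith
    positivity
  nlinarith

lemma hasDerivAt_derivLogNq (hq : 2 ≤ q) (hR : powDiff (q - 1) y t ≠ 0) (hD : powSum q y t ≠ 0) :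
    HasDerivAt (derivLogNq q y) (derivLogNq q y t *
      ((q - 1) * powAdd (q - 1 - 1) y t / powDiff (q - 1) y t - derivLogNq q y t)) t := by
  refine (((hasDerivAt_powDiff (by linarith) y t).const_mul (q * y)).fun_div
    (hasDerivAt_powSum (by linarith) y t) hD).congr_deriv ?_
  unfold derivLogNq
  field_simp

lemma strictAntiOn_powAdd_div_powDiff_sub_derivLogNq (hq : 2 ≤ q) (ht : 0 < t) :
    StrictAntiOn (fun y => (q - 1) * powAdd (q - 1 - 1) y t / powDiff (q - 1) y t
      - derivLogNq q y t) (Ioo 0 (1 / t)) := by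
  intro y₁ hy₁ y₂ hy₂ h12
  have h₁ := antitoneOn_powAdd_div_powDiff (p := q - 1) (by linarith) ht hy₁ hy₂ h12.le
  have h₂ := strictMonoOn_mul_powDiff_div_powSum (q := q) (by linarith) ht hy₁ hy₂ h12
  simp only [mul_div_assoc, derivLogNq, mul_assoc] at h₁ h₂ ⊢
  linarith [mul_le_mul_of_nonneg_left h₁ (by linarith : (0 : ℝ) ≤ q - 1),
    mul_lt_mul_of_pos_left h₂ (by linarith : (0 : ℝ) < q)]

lemma strictAntiOn_derivLogNq_div {y₁ y₂ : ℝ} (hq : 2 ≤ q) (hy₁ : 0 < y₁) (h12 : y₁ < y₂) :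
    StrictAntiOn (fun t => derivLogNq q y₂ t / derivLogNq q y₁ t) (Ioo 0 (1 / y₂)) := by
  have hy₂ : 0 < y₂ := hy₁.trans h12
  have hmem : ∀ t ∈ Ioo 0 (1 / y₂), ∀ y, 0 < y → y ≤ y₂ → y ∈ Ioo 0 (1 / t) ∧ y * t < 1 :=
    fun t ht y hy hyy₂ => by
      have := mul_lt_one_of_mem_Ioo hy₂ ht
      refine ⟨⟨hy, (lt_div_iff₀ ht.1).2 ?_⟩, ?_⟩ <;> nlinarith [ht.1]
  have hu : ∀ t ∈ Ioo 0 (1 / y₂), ∀ y, 0 < y → y ≤ y₂ → 0 < derivLogNq q y t :=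
    fun t ht y hy hyy₂ => derivLogNq_pos (by linarith) hy ht.1 (hmem t ht y hy hyy₂).2.le
  have hderiv : ∀ t ∈ Ioo 0 (1 / y₂), ∀ y, 0 < y → y ≤ y₂ →
      HasDerivAt (derivLogNq q y) (derivLogNq q y t *
        ((q - 1) * powAdd (q - 1 - 1) y t / powDiff (q - 1) y t - derivLogNq q y t)) t :=
    fun t ht y hy hyy₂ => hasDerivAt_derivLogNq hq
      (powDiff_pos (by linarith) (by linarith) ht.1 (hmem t ht y hy hyy₂).2.le).ne'
      (powSum_pos hy (by linarith [ht.1]) (hmem t ht y hy hyy₂).2.le).ne'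
  refine strictAntiOn_Ioo_of_hasDerivAt_neg
    (fun t ht => (hderiv t ht y₂ hy₂ le_rfl).fun_div (hderiv t ht y₁ hy₁ h12.le)
      (hu t ht y₁ hy₁ h12.le).ne')
    fun t ht => div_neg_of_neg_of_pos ?_ (pow_pos (hu t ht y₁ hy₁ h12.le) 2)
  have hH := strictAntiOn_powAdd_div_powDiff_sub_derivLogNq hq ht.1
    (hmem t ht y₁ hy₁ h12.le).1 (hmem t ht y₂ hy₂ le_rfl).1 h12
  have := mul_pos (hu t ht y₁ hy₁ h12.le) (hu t ht y₂ hy₂ le_rfl)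
  simp only at hH
  nlinarith

lemma Nq_one_zero (q : ℝ) (hy : y + 1 ≠ 0) : Nq q 1 0 y = 1 := by
  simp only [Nq_one_eq_powSum_div, powSum, add_zero, mul_zero, sub_zero, one_rpow, mul_one]
  exact div_self hy

lemma strictAntiOn_log_Nq_div {y₁ y₂ : ℝ} (hq : 2 ≤ q) (hy₁ : 0 < y₁) (h12 : y₁ < y₂) :
    StrictAntiOn (fun t => log (Nq q 1 t y₂) / log (Nq q 1 t y₁)) (Ioc 0 (1 / y₂)) := by
  have hy₂ : 0 < y₂ := hy₁.trans h12
  have hderiv : ∀ y, 0 < y → y ≤ y₂ → ∀ t ∈ Icc 0 (1 / y₂),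
      HasDerivAt (fun t => log (Nq q 1 t y)) (derivLogNq q y t) t := fun y hy hyy₂ t ht => by
    have : y₂ * t ≤ 1 := by have := ht.2; rwa [le_div_iff₀ hy₂, mul_comm] at this
    exact hasDerivAt_log_Nq (by linarith) (by linarith)
      (powSum_pos hy (by linarith [ht.1]) (by nlinarith [ht.1])).ne'
  have hcont : ∀ y, 0 < y → y ≤ y₂ → ContinuousOn (fun t => log (Nq q 1 t y)) (Icc 0 (1 / y₂)) :=
    fun y hy hyy₂ t ht => (hderiv y hy hyy₂ t ht).continuousAt.continuousWithinAt
  refine strictAntiOn_div_of_strictAntiOn_deriv_div (hcont y₂ hy₂ le_rfl) (hcont y₁ hy₁ h12.le)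
    (fun t ht => hderiv y₂ hy₂ le_rfl t (Ioo_subset_Icc_self ht))
    (fun t ht => hderiv y₁ hy₁ h12.le t (Ioo_subset_Icc_self ht))
    (by simp [Nq_one_zero q (by linarith : y₂ + 1 ≠ 0)])
    (by simp [Nq_one_zero q (by linarith : y₁ + 1 ≠ 0)])
    (fun t ht => derivLogNq_pos (by linarith) hy₁ ht.1 ?_) (strictAntiOn_derivLogNq_div hq hy₁ h12)
  have := mul_lt_one_of_mem_Ioo hy₂ ht
  nlinarith [ht.1]

end TwoPoint

theorem stmt12 (q ρ x₀ : ℝ) (hq : 2 ≤ q) (hρ0 : 0 < ρ) (hρ1 : ρ < 1) (hx₀ : 0 < x₀) :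
    ∀ y₁ y₂ : ℝ, 0 < y₁ → y₁ < y₂ → y₂ ≤ 1 / x₀ →
      Rq q ρ x₀ y₁ < Rq q ρ x₀ y₂ := by
  intro y₁ y₂ hy₁ h12 hy₂x₀
  have hy₂ : 0 < y₂ := hy₁.trans h12
  have hy₂x : y₂ * x₀ ≤ 1 := (le_div_iff₀ hx₀).1 hy₂x₀
  have hx : x₀ ∈ Ioc 0 (1 / y₂) := ⟨hx₀, (le_div_iff₀ hy₂).2 (by linarith)⟩
  have hρx : ρ * x₀ ∈ Ioc 0 (1 / y₂) := ⟨by positivity, by nlinarith [hx.2]⟩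
  have hφ := strictAntiOn_log_Nq_div hq hy₁ h12 hρx hx (mul_lt_of_lt_one_left hx₀ hρ1)
  have hq1 : 1 < q := by linarith
  have hy₁t : ∀ t ∈ Ioc 0 (1 / y₂), y₁ * t ≤ 1 := fun t ht => by
    have := (le_div_iff₀ hy₂).1 ht.2; nlinarith [ht.1]
  have h₁ := log_Nq_pos hq1 hy₁ hx₀ (hy₁t x₀ hx)
  have h₂ := log_Nq_pos hq1 hy₂ hx₀ hy₂x
  have h₃ := log_Nq_pos hq1 hy₁ hρx.1 (hy₁t _ hρx)
  simp only at hφ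
  rw [div_lt_div_iff₀ h₁ h₃] at hφ
  unfold Rq
  rw [Nq_eq_Nq_one_mul q ρ x₀ y₁, Nq_eq_Nq_one_mul q ρ x₀ y₂, div_lt_div_iff₀ h₁ h₂]
  linarith
end
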